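/- arXiv:2504.16912 — 9 statements merged into one kernel-verified Lean document; each statement's English description precedes it below -/
import Mathlib

section
/- Let M₀ and M₁ be Bernoulli random variables and let Y₀₀ and Y₀₁ be Bernoulli random variables (the potential outcomes I_{0,0} and I_{0,1}). Assume effect homogeneity across principal strata: for every m₀, m₁ ∈ {0,1} with P(M₀ = m₀, M₁ = m₁) > 0, E[Y₀₁ − Y₀₀ | M₀ = m₀, M₁ = m₁] = E[Y₀₁ − Y₀₀]. Then the natural indirect effect factorizes: E[I_{0,M₁} − I_{0,M₀}] = E[M₁ − M₀] · E[Y₀₁ − Y₀₀]. -/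
open MeasureTheory

/-- A Bernoulli random variable: measurable and taking only the values 0 and 1. -/
def IsBernoulli {Ω : Type*} [MeasurableSpace Ω] (X : Ω → ℝ) : Prop :=
  Measurable X ∧ ∀ ω, X ω = 0 ∨ X ω = 1

/-- Conditional expectation of `X` given the event `E`: `E[X·1_E]/P(E)`. -/
noncomputable def cexp {Ω : Type*} [MeasurableSpace Ω] (P : Measure Ω)
    (X : Ω → ℝ) (E : Set Ω) : ℝ :=
  (∫ ω in E, X ω ∂P) / (P E).toReal

/-- Factorization of the natural indirect effect under effect homogeneity
across principal strata. -/
theorem stmt_0 {Ω : Type*} [MeasurableSpace Ω] (P : Measure Ω) [IsProbabilityMeasure P]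
    (M0 M1 Y00 Y01 : Ω → ℝ)
    (hM0 : IsBernoulli M0) (hM1 : IsBernoulli M1)
    (hY00 : IsBernoulli Y00) (hY01 : IsBernoulli Y01)
    (hhom : ∀ m0 ∈ ({0, 1} : Set ℝ), ∀ m1 ∈ ({0, 1} : Set ℝ),
      0 < P {ω | M0 ω = m0 ∧ M1 ω = m1} →
      cexp P (fun ω => Y01 ω - Y00 ω) {ω | M0 ω = m0 ∧ M1 ω = m1}
        = ∫ ω, (Y01 ω - Y00 ω) ∂P) :
    ∫ ω, ((Y01 ω * M1 ω + Y00 ω * (1 - M1 ω))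
        - (Y01 ω * M0 ω + Y00 ω * (1 - M0 ω))) ∂P
      = (∫ ω, (M1 ω - M0 ω) ∂P) * ∫ ω, (Y01 ω - Y00 ω) ∂P := by
  obtain ⟨hM0m, hM0v⟩ := hM0
  obtain ⟨hM1m, hM1v⟩ := hM1
  obtain ⟨hY00m, hY00v⟩ := hY00
  obtain ⟨hY01m, hY01v⟩ := hY01
  set f : Ω → ℝ := fun ω => Y01 ω - Y00 ω with hf
  set g : Ω → ℝ := fun ω => M1 ω - M0 ω with hg
  set μ : ℝ := ∫ ω, f ω ∂P with hμ
  set S : ℝ → ℝ → Set Ω := fun a b => {ω | M0 ω = a ∧ M1 ω = b} with hS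
  have hSmeas : ∀ a b, MeasurableSet (S a b) := fun a b =>
    (hM0m (measurableSet_singleton a)).inter (hM1m (measurableSet_singleton b))
  -- pointwise identity
  have hpt : (fun ω => ((Y01 ω * M1 ω + Y00 ω * (1 - M1 ω))
      - (Y01 ω * M0 ω + Y00 ω * (1 - M0 ω)))) = fun ω => f ω * g ω := by
    funext ω; simp only [hf, hg]; ring
  -- integrability
  have hfgm : Measurable (fun ω => f ω * g ω) :=
    (hY01m.sub hY00m).mul (hM1m.sub hM0m)
  have hgm : Measurable g := hM1m.sub hM0m
  have hbound : ∀ ω, ‖f ω * g ω‖ ≤ 1 := by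
    intro ω
    rcases hY01v ω with h1 | h1 <;> rcases hY00v ω with h2 | h2 <;>
      rcases hM1v ω with h3 | h3 <;> rcases hM0v ω with h4 | h4 <;>
      simp [hf, hg, h1, h2, h3, h4]
  have hgbound : ∀ ω, ‖g ω‖ ≤ 1 := by
    intro ω
    rcases hM1v ω with h3 | h3 <;> rcases hM0v ω with h4 | h4 <;>
      simp [hg, h3, h4]
  have hifg : Integrable (fun ω => f ω * g ω) P :=
    (integrable_const (1:ℝ)).mono' hfgm.aestronglyMeasurable (ae_of_all _ hbound)
  have hig : Integrable g P :=
    (integrable_const (1:ℝ)).mono' hgm.aestronglyMeasurable (ae_of_all _ hgbound)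
  -- per-stratum values
  have hstratf : ∀ a b : ℝ, a ∈ ({0,1} : Set ℝ) → b ∈ ({0,1} : Set ℝ) →
      ∫ ω in S a b, f ω ∂P = μ * (P (S a b)).toReal := by
    intro a b ha hb
    by_cases hP : P (S a b) = 0
    · rw [setIntegral_measure_zero _ hP, hP]; simp
    · have hpos : 0 < P (S a b) := lt_of_le_of_ne zero_le (Ne.symm hP)
      have h := hhom a ha b hb hpos
      rw [cexp] at h
      have hne : (P (S a b)).toReal ≠ 0 := by
        simp [ENNReal.toReal_eq_zero_iff, hP, measure_ne_top P]
      change (∫ ω in S a b, f ω ∂P) / (P (S a b)).toReal = μ at h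
      field_simp at h
      linear_combination h
  have hstratfg : ∀ a b : ℝ, a ∈ ({0,1} : Set ℝ) → b ∈ ({0,1} : Set ℝ) →
      ∫ ω in S a b, f ω * g ω ∂P = (b - a) * (μ * (P (S a b)).toReal) := by
    intro a b ha hb
    have hcong : ∫ ω in S a b, f ω * g ω ∂P = ∫ ω in S a b, (b - a) * f ω ∂P := by
      apply setIntegral_congr_fun (hSmeas a b)
      intro ω hω
      simp only [hg]
      rw [hω.1, hω.2]
      ring
    rw [hcong, integral_const_mul, hstratf a b ha hb]
  have hstratg : ∀ a b : ℝ,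
      ∫ ω in S a b, g ω ∂P = (b - a) * (P (S a b)).toReal := by
    intro a b
    have hcong : ∫ ω in S a b, g ω ∂P = ∫ ω in S a b, (b - a) ∂P := by
      apply setIntegral_congr_fun (hSmeas a b)
      intro ω hω
      simp only [hg]
      rw [hω.1, hω.2]
    rw [hcong, setIntegral_const, smul_eq_mul, measureReal_def]; ring
  -- decomposition of the total integral into four strata
  have hdecomp : ∀ h : Ω → ℝ, Integrable h P →
      ∫ ω, h ω ∂P = (∫ ω in S 0 0, h ω ∂P) + (∫ ω in S 0 1, h ω ∂P)
        + ((∫ ω in S 1 0, h ω ∂P) + (∫ ω in S 1 1, h ω ∂P)) := by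
    intro h hih
    have hd1 : Disjoint (S 0 0) (S 0 1) := by
      rw [Set.disjoint_left]
      rintro ω ⟨_, h1⟩ ⟨_, h2⟩
      rw [h1] at h2; norm_num at h2
    have hd2 : Disjoint (S 1 0) (S 1 1) := by
      rw [Set.disjoint_left]
      rintro ω ⟨_, h1⟩ ⟨_, h2⟩
      rw [h1] at h2; norm_num at h2
    have hd3 : Disjoint (S 0 0 ∪ S 0 1) (S 1 0 ∪ S 1 1) := by
      rw [Set.disjoint_left]
      rintro ω (⟨h1, _⟩ | ⟨h1, _⟩) (⟨h2, _⟩ | ⟨h2, _⟩) <;>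
        (rw [h1] at h2; norm_num at h2)
    have huniv : (S 0 0 ∪ S 0 1) ∪ (S 1 0 ∪ S 1 1) = Set.univ := by
      ext ω
      simp only [Set.mem_union, Set.mem_univ, iff_true, hS, Set.mem_setOf_eq]
      rcases hM0v ω with h4 | h4 <;> rcases hM1v ω with h3 | h3 <;> tauto
    calc ∫ ω, h ω ∂P = ∫ ω in (S 0 0 ∪ S 0 1) ∪ (S 1 0 ∪ S 1 1), h ω ∂P := by
          rw [huniv, setIntegral_univ]
      _ = (∫ ω in S 0 0 ∪ S 0 1, h ω ∂P) + ∫ ω in S 1 0 ∪ S 1 1, h ω ∂P := by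
          exact setIntegral_union hd3 ((hSmeas 1 0).union (hSmeas 1 1))
            (hih.integrableOn) (hih.integrableOn)
      _ = _ := by
          rw [setIntegral_union hd1 (hSmeas 0 1) hih.integrableOn hih.integrableOn,
            setIntegral_union hd2 (hSmeas 1 1) hih.integrableOn hih.integrableOn]
  have h0 : (0:ℝ) ∈ ({0,1} : Set ℝ) := by norm_num
  have h1 : (1:ℝ) ∈ ({0,1} : Set ℝ) := by norm_num
  rw [hpt]
  rw [hdecomp _ hifg, hdecomp _ hig,
    hstratfg 0 0 h0 h0, hstratfg 0 1 h0 h1, hstratfg 1 0 h1 h0, hstratfg 1 1 h1 h1,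
    hstratg 0 0, hstratg 0 1, hstratg 1 0, hstratg 1 1]
  show _ = _ * μ
  ring
end

section
/- Let A, M₀, M₁ be Bernoulli random variables and let Y₀₀ and Y₀₁ be Bernoulli random variables (the potential outcomes I_{0,0} and I_{0,1}). Fix a ∈ {0,1} with P(A = a) > 0. Assume effect homogeneity across principal strata within the group A = a: for every m₀, m₁ ∈ {0,1} with P(M₀ = m₀, M₁ = m₁, A = a) > 0, E[Y₀₁ − Y₀₀ | M₀ = m₀, M₁ = m₁, A = a] = E[Y₀₁ − Y₀₀ | A = a]. Then the conditional natural indirect effect factorizes: E[I_{0,M₁} − I_{0,M₀} | A = a] = E[M₁ − M₀ | A = a] · E[Y₀₁ − Y₀₀ | A = a]. -/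
open MeasureTheory

/-- Factorization of the conditional (groupwise) natural indirect effect under
effect homogeneity across principal strata within the group `A = a`. -/
theorem stmt_1 {Ω : Type*} [MeasurableSpace Ω] (P : Measure Ω) [IsProbabilityMeasure P]
    (A M0 M1 Y00 Y01 : Ω → ℝ)
    (hA : IsBernoulli A) (hM0 : IsBernoulli M0) (hM1 : IsBernoulli M1)
    (hY00 : IsBernoulli Y00) (hY01 : IsBernoulli Y01)
    (a : ℝ) (ha : a = 0 ∨ a = 1) (hpos : 0 < P {ω | A ω = a})
    (hhom : ∀ m0 ∈ ({0, 1} : Set ℝ), ∀ m1 ∈ ({0, 1} : Set ℝ),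
      0 < P {ω | M0 ω = m0 ∧ M1 ω = m1 ∧ A ω = a} →
      cexp P (fun ω => Y01 ω - Y00 ω) {ω | M0 ω = m0 ∧ M1 ω = m1 ∧ A ω = a}
        = cexp P (fun ω => Y01 ω - Y00 ω) {ω | A ω = a}) :
    cexp P (fun ω => (Y01 ω * M1 ω + Y00 ω * (1 - M1 ω))
        - (Y01 ω * M0 ω + Y00 ω * (1 - M0 ω))) {ω | A ω = a}
      = cexp P (fun ω => M1 ω - M0 ω) {ω | A ω = a}
        * cexp P (fun ω => Y01 ω - Y00 ω) {ω | A ω = a} := by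
  obtain ⟨hAm, hAv⟩ := hA
  obtain ⟨hM0m, hM0v⟩ := hM0
  obtain ⟨hM1m, hM1v⟩ := hM1
  obtain ⟨hY00m, hY00v⟩ := hY00
  obtain ⟨hY01m, hY01v⟩ := hY01
  set g : Ω → ℝ := fun ω => Y01 ω - Y00 ω with hgdef
  set d : Ω → ℝ := fun ω => M1 ω - M0 ω with hddef
  set c : ℝ := cexp P g {ω | A ω = a} with hcdef
  set S : ℝ → ℝ → Set Ω := fun m0 m1 => {ω | M0 ω = m0 ∧ M1 ω = m1 ∧ A ω = a} with hSdef
  have hSmeas : ∀ m0 m1 : ℝ, MeasurableSet (S m0 m1) := by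
    intro m0 m1
    exact (hM0m (measurableSet_singleton m0)).inter
      ((hM1m (measurableSet_singleton m1)).inter (hAm (measurableSet_singleton a)))
  have hAmeas : MeasurableSet {ω | A ω = a} := hAm (measurableSet_singleton a)
  -- integrability of bounded measurable functions
  have hint : ∀ f : Ω → ℝ, Measurable f → (∀ ω, |f ω| ≤ 2) → Integrable f P := by
    intro f hf hb
    exact (integrable_const (2:ℝ)).mono' hf.aestronglyMeasurable
      (ae_of_all _ (by simpa using hb))
  have hgb : ∀ ω, |g ω| ≤ 2 := by
    intro ω
    simp only [hgdef]
    rcases hY01v ω with h1 | h1 <;> rcases hY00v ω with h2 | h2 <;>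
      rw [h1, h2] <;> norm_num
  have hdb : ∀ ω, |d ω| ≤ 2 := by
    intro ω
    simp only [hddef]
    rcases hM1v ω with h1 | h1 <;> rcases hM0v ω with h2 | h2 <;>
      rw [h1, h2] <;> norm_num
  have hgdb : ∀ ω, |g ω * d ω| ≤ 2 := by
    intro ω
    simp only [hgdef, hddef]
    rcases hY01v ω with h1 | h1 <;> rcases hY00v ω with h2 | h2 <;>
      rcases hM1v ω with h3 | h3 <;> rcases hM0v ω with h4 | h4 <;>
      rw [h1, h2, h3, h4] <;> norm_num
  have hgm : Measurable g := hY01m.sub hY00m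
  have hdm : Measurable d := hM1m.sub hM0m
  have hintgd : Integrable (fun ω => g ω * d ω) P := hint _ (hgm.mul hdm) hgdb
  have hintd : Integrable d P := hint _ hdm hdb
  -- per-stratum integrals
  have hgS : ∀ m0 ∈ ({0,1} : Set ℝ), ∀ m1 ∈ ({0,1} : Set ℝ),
      ∫ ω in S m0 m1, g ω ∂P = c * (P (S m0 m1)).toReal := by
    intro m0 hm0 m1 hm1
    by_cases hPS : P (S m0 m1) = 0
    · rw [Measure.restrict_eq_zero.mpr hPS, integral_zero_measure, hPS]
      simp
    · have hpos' : 0 < P (S m0 m1) := lt_of_le_of_ne zero_le (Ne.symm hPS)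
      have h := hhom m0 hm0 m1 hm1 hpos'
      have ht : (P (S m0 m1)).toReal ≠ 0 := by
        have : P (S m0 m1) ≠ ⊤ := measure_ne_top _ _
        exact (ENNReal.toReal_pos hPS this).ne'
      unfold cexp at h
      rw [div_eq_iff ht] at h
      exact h
  have hgdS : ∀ m0 ∈ ({0,1} : Set ℝ), ∀ m1 ∈ ({0,1} : Set ℝ),
      ∫ ω in S m0 m1, g ω * d ω ∂P = (m1 - m0) * (c * (P (S m0 m1)).toReal) := by
    intro m0 hm0 m1 hm1
    have heq : ∫ ω in S m0 m1, g ω * d ω ∂P = ∫ ω in S m0 m1, (m1 - m0) * g ω ∂P := by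
      apply setIntegral_congr_fun (hSmeas m0 m1)
      intro ω hω
      obtain ⟨h0, h1, _⟩ := hω
      simp only [hddef, h0, h1]
      ring
    rw [heq, integral_const_mul, hgS m0 hm0 m1 hm1]
  have hdS : ∀ m0 m1 : ℝ,
      ∫ ω in S m0 m1, d ω ∂P = (m1 - m0) * (P (S m0 m1)).toReal := by
    intro m0 m1
    have heq : ∫ ω in S m0 m1, d ω ∂P = ∫ _ω in S m0 m1, (m1 - m0) ∂P := by
      apply setIntegral_congr_fun (hSmeas m0 m1)
      intro ω hω
      obtain ⟨h0, h1, _⟩ := hω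
      simp [hddef, h0, h1]
    rw [heq, setIntegral_const, smul_eq_mul, mul_comm]; rfl
  -- disjointness
  have hdisj : ∀ m0 m1 m0' m1' : ℝ, (m0 ≠ m0' ∨ m1 ≠ m1') →
      Disjoint (S m0 m1) (S m0' m1') := by
    intro m0 m1 m0' m1' hne
    rw [Set.disjoint_left]
    rintro ω ⟨h0, h1, _⟩ ⟨h0', h1', _⟩
    rcases hne with h | h
    · exact h (h0 ▸ h0')
    · exact h (h1 ▸ h1')
  -- decomposition of the event A = a
  have hU : {ω | A ω = a} = (S 0 0 ∪ S 0 1) ∪ (S 1 0 ∪ S 1 1) := by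
    ext ω
    simp only [Set.mem_union, hSdef, Set.mem_setOf_eq]
    constructor
    · intro hAω
      rcases hM0v ω with h0 | h0 <;> rcases hM1v ω with h1 | h1 <;> tauto
    · rintro ((⟨_, _, h⟩ | ⟨_, _, h⟩) | (⟨_, _, h⟩ | ⟨_, _, h⟩)) <;> exact h
  have hsplit : ∀ f : Ω → ℝ, Integrable f P →
      ∫ ω in {ω | A ω = a}, f ω ∂P =
        ∫ ω in S 0 0, f ω ∂P + ∫ ω in S 0 1, f ω ∂P
          + (∫ ω in S 1 0, f ω ∂P + ∫ ω in S 1 1, f ω ∂P) := by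
    intro f hf
    rw [hU]
    rw [setIntegral_union (Disjoint.union_left
        (hdisj 0 0 1 0 (Or.inl (by norm_num))) (hdisj 0 1 1 0 (Or.inl (by norm_num))) |>.union_right
        (Disjoint.union_left (hdisj 0 0 1 1 (Or.inl (by norm_num)))
          (hdisj 0 1 1 1 (Or.inl (by norm_num)))))
      ((hSmeas 1 0).union (hSmeas 1 1)) (hf.integrableOn) (hf.integrableOn),
      setIntegral_union (hdisj 0 0 0 1 (Or.inr (by norm_num))) (hSmeas 0 1)
        hf.integrableOn hf.integrableOn,
      setIntegral_union (hdisj 1 0 1 1 (Or.inr (by norm_num))) (hSmeas 1 1)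
        hf.integrableOn hf.integrableOn]
  -- put it together
  have h00 : (0:ℝ) ∈ ({0,1} : Set ℝ) := by norm_num
  have h11 : (1:ℝ) ∈ ({0,1} : Set ℝ) := by norm_num
  have hnum1 : ∫ ω in {ω | A ω = a}, g ω * d ω ∂P =
      c * ((P (S 0 1)).toReal - (P (S 1 0)).toReal) := by
    rw [hsplit _ hintgd, hgdS 0 h00 0 h00, hgdS 0 h00 1 h11, hgdS 1 h11 0 h00,
      hgdS 1 h11 1 h11]
    ring
  have hnum2 : ∫ ω in {ω | A ω = a}, d ω ∂P =
      (P (S 0 1)).toReal - (P (S 1 0)).toReal := by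
    rw [hsplit _ hintd, hdS 0 0, hdS 0 1, hdS 1 0, hdS 1 1]
    ring
  have hfun : (fun ω => (Y01 ω * M1 ω + Y00 ω * (1 - M1 ω))
      - (Y01 ω * M0 ω + Y00 ω * (1 - M0 ω))) = fun ω => g ω * d ω := by
    funext ω
    simp only [hgdef, hddef]
    ring
  rw [hfun]
  show cexp P (fun ω => g ω * d ω) {ω | A ω = a} = cexp P d {ω | A ω = a} * c
  unfold cexp
  rw [hnum1, hnum2]
  ring
end

section
/- Let M₁ be a Bernoulli random variable and let Y_{a,m} for a, m ∈ {0,1} be Bernoulli random variables (the potential outcomes I_{a,m}). Assume principal-strata invariance of the controlled direct effect: for every m ∈ {0,1} and every m₁ ∈ {0,1} with P(M₁ = m₁) > 0, E[Y_{1,m} − Y_{0,m} | M₁ = m₁] = E[Y_{1,m} − Y_{0,m}]. Then the natural direct effect satisfies E[I_{1,M₁} − I_{0,M₁}] = E[Y_{1,0} − Y_{0,0}] · (1 − E[M₁]) + E[Y_{1,1} − Y_{0,1}] · E[M₁]. -/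
open MeasureTheory

lemma bern_integrable {Ω : Type*} [MeasurableSpace Ω] (P : Measure Ω) [IsFiniteMeasure P]
    {X : Ω → ℝ} (h : IsBernoulli X) : Integrable X P :=
  (integrable_const (1:ℝ)).mono' h.1.aestronglyMeasurable
    (Filter.Eventually.of_forall fun ω => by rcases h.2 ω with h'|h' <;> simp [h'])

/-- Factorization of the natural direct effect under principal-strata
invariance of the controlled direct effect. `Y a m` is the potential
outcome `I_{a,m}`. -/
theorem stmt_2 {Ω : Type*} [MeasurableSpace Ω] (P : Measure Ω) [IsProbabilityMeasure P]
    (M1 : Ω → ℝ) (Y : Fin 2 → Fin 2 → Ω → ℝ)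
    (hM1 : IsBernoulli M1) (hY : ∀ a m, IsBernoulli (Y a m))
    (hinv : ∀ m : Fin 2, ∀ m1 ∈ ({0, 1} : Set ℝ),
      0 < P {ω | M1 ω = m1} →
      cexp P (fun ω => Y 1 m ω - Y 0 m ω) {ω | M1 ω = m1}
        = ∫ ω, (Y 1 m ω - Y 0 m ω) ∂P) :
    ∫ ω, ((Y 1 1 ω * M1 ω + Y 1 0 ω * (1 - M1 ω))
        - (Y 0 1 ω * M1 ω + Y 0 0 ω * (1 - M1 ω))) ∂P
      = (∫ ω, (Y 1 0 ω - Y 0 0 ω) ∂P) * (1 - ∫ ω, M1 ω ∂P)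
        + (∫ ω, (Y 1 1 ω - Y 0 1 ω) ∂P) * ∫ ω, M1 ω ∂P := by
  obtain ⟨hMm, hMv⟩ := hM1
  have mE1 : MeasurableSet {ω | M1 ω = (1:ℝ)} := hMm (measurableSet_singleton 1)
  have mE0 : MeasurableSet {ω | M1 ω = (0:ℝ)} := hMm (measurableSet_singleton 0)
  -- integrability
  have hD : ∀ m : Fin 2, Integrable (fun ω => Y 1 m ω - Y 0 m ω) P :=
    fun m => (bern_integrable P (hY 1 m)).sub (bern_integrable P (hY 0 m))
  have hf1 : Integrable (fun ω => (Y 1 1 ω - Y 0 1 ω) * M1 ω) P := by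
    refine (integrable_const (1:ℝ)).mono'
      (((hY 1 1).1.sub (hY 0 1).1).mul hMm).aestronglyMeasurable
      (Filter.Eventually.of_forall fun ω => ?_)
    rcases (hY 1 1).2 ω with h1|h1 <;> rcases (hY 0 1).2 ω with h2|h2 <;>
      rcases hMv ω with h3|h3 <;> simp [h1, h2, h3]
  have hf0 : Integrable (fun ω => (Y 1 0 ω - Y 0 0 ω) * (1 - M1 ω)) P := by
    refine (integrable_const (1:ℝ)).mono'
      (((hY 1 0).1.sub (hY 0 0).1).mul (measurable_const.sub hMm)).aestronglyMeasurable
      (Filter.Eventually.of_forall fun ω => ?_)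
    rcases (hY 1 0).2 ω with h1|h1 <;> rcases (hY 0 0).2 ω with h2|h2 <;>
      rcases hMv ω with h3|h3 <;> simp [h1, h2, h3]
  -- rewrite LHS
  have hsplit : ∫ ω, ((Y 1 1 ω * M1 ω + Y 1 0 ω * (1 - M1 ω))
        - (Y 0 1 ω * M1 ω + Y 0 0 ω * (1 - M1 ω))) ∂P
      = (∫ ω, (Y 1 1 ω - Y 0 1 ω) * M1 ω ∂P)
        + ∫ ω, (Y 1 0 ω - Y 0 0 ω) * (1 - M1 ω) ∂P := by
    rw [← integral_add hf1 hf0]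
    congr 1; funext ω; ring
  -- products as indicator integrals
  have hind1 : (fun ω => (Y 1 1 ω - Y 0 1 ω) * M1 ω)
      = Set.indicator {ω | M1 ω = (1:ℝ)} (fun ω => Y 1 1 ω - Y 0 1 ω) := by
    funext ω
    by_cases hω : M1 ω = 1
    · simp [Set.indicator_of_mem, hω]
    · have h0 : M1 ω = 0 := (hMv ω).resolve_right hω
      simp [Set.indicator_of_notMem, hω, h0]
  have hind0 : (fun ω => (Y 1 0 ω - Y 0 0 ω) * (1 - M1 ω))
      = Set.indicator {ω | M1 ω = (0:ℝ)} (fun ω => Y 1 0 ω - Y 0 0 ω) := by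
    funext ω
    by_cases hω : M1 ω = 0
    · simp [Set.indicator_of_mem, hω]
    · have h1 : M1 ω = 1 := (hMv ω).resolve_left hω
      simp [Set.indicator_of_notMem, hω, h1]
  -- ∫ M1 = P E1
  have hMind : M1 = Set.indicator {ω | M1 ω = (1:ℝ)} (fun _ => (1:ℝ)) := by
    funext ω
    by_cases hω : M1 ω = 1
    · simp [Set.indicator_of_mem, hω]
    · have h0 : M1 ω = 0 := (hMv ω).resolve_right hω
      simp [Set.indicator_of_notMem, hω, h0]
  have hM1int : ∫ ω, M1 ω ∂P = (P {ω | M1 ω = (1:ℝ)}).toReal := by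
    conv_lhs => rw [show (fun ω => M1 ω) = M1 from rfl, hMind]
    rw [integral_indicator_const (1:ℝ) mE1, smul_eq_mul, mul_one, measureReal_def]
  -- P E0 = 1 - P E1
  have hPsum : (P {ω | M1 ω = (0:ℝ)}).toReal = 1 - (P {ω | M1 ω = (1:ℝ)}).toReal := by
    have hdisj : Disjoint {ω | M1 ω = (0:ℝ)} {ω | M1 ω = (1:ℝ)} := by
      rw [Set.disjoint_left]
      intro ω h0 h1
      simp only [Set.mem_setOf_eq] at h0 h1
      rw [h0] at h1; norm_num at h1
    have huniv : {ω | M1 ω = (0:ℝ)} ∪ {ω | M1 ω = (1:ℝ)} = Set.univ := by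
      ext ω; simp [hMv ω]
    have := measure_union (μ := P) hdisj mE1
    rw [huniv, measure_univ] at this
    have h0ne : P {ω | M1 ω = (0:ℝ)} ≠ ⊤ := measure_ne_top _ _
    have h1ne : P {ω | M1 ω = (1:ℝ)} ≠ ⊤ := measure_ne_top _ _
    have := congrArg ENNReal.toReal this
    rw [ENNReal.toReal_add h0ne h1ne] at this
    simp at this
    linarith
  -- key factorization
  have key : ∀ (m : Fin 2) (m1 : ℝ), m1 ∈ ({0, 1} : Set ℝ) →
      ∫ ω in {ω | M1 ω = m1}, (Y 1 m ω - Y 0 m ω) ∂P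
        = (∫ ω, (Y 1 m ω - Y 0 m ω) ∂P) * (P {ω | M1 ω = m1}).toReal := by
    intro m m1 hm1
    by_cases h : P {ω | M1 ω = m1} = 0
    · rw [h, ENNReal.toReal_zero, mul_zero,
        ← integral_zero_measure (fun ω => Y 1 m ω - Y 0 m ω)]
      congr 1
      exact Measure.restrict_eq_zero.mpr h
    · have hpos : 0 < P {ω | M1 ω = m1} := zero_le.lt_of_ne (Ne.symm h)
      have hthis := hinv m m1 hm1 hpos
      unfold cexp at hthis
      have hne : (P {ω | M1 ω = m1}).toReal ≠ 0 :=
        ENNReal.toReal_ne_zero.mpr ⟨h, measure_ne_top _ _⟩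
      rw [div_eq_iff hne] at hthis
      exact hthis
  have h0mem : (0:ℝ) ∈ ({0, 1} : Set ℝ) := by simp
  have h1mem : (1:ℝ) ∈ ({0, 1} : Set ℝ) := by simp
  rw [hsplit, hind1, hind0, integral_indicator mE1, integral_indicator mE0,
    key 1 1 h1mem, key 0 0 h0mem, hM1int, hPsum]
  ring
end

section
/- Let A and M₁ be Bernoulli random variables and let Y_{a,m} for a, m ∈ {0,1} be Bernoulli random variables (the potential outcomes I_{a,m}). Fix a ∈ {0,1} with P(A = a) > 0. Assume principal-strata invariance of the controlled direct effect within the group A = a: for every m ∈ {0,1} and every m₁ ∈ {0,1} with P(M₁ = m₁, A = a) > 0, E[Y_{1,m} − Y_{0,m} | M₁ = m₁, A = a] = E[Y_{1,m} − Y_{0,m} | A = a]. Then the conditional natural direct effect satisfies E[I_{1,M₁} − I_{0,M₁} | A = a] = E[Y_{1,0} − Y_{0,0} | A = a] · (1 − E[M₁ | A = a]) + E[Y_{1,1} − Y_{0,1} | A = a] · E[M₁ | A = a]. -/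
open MeasureTheory

lemma integrable_of_bdd {Ω : Type*} [MeasurableSpace Ω] (P : Measure Ω) [IsFiniteMeasure P]
    {f : Ω → ℝ} (hm : Measurable f) (C : ℝ) (hb : ∀ ω, |f ω| ≤ C) : Integrable f P :=
  Integrable.mono' (integrable_const C) hm.aestronglyMeasurable (Filter.Eventually.of_forall hb)

lemma bern_abs {Ω : Type*} [MeasurableSpace Ω] {X : Ω → ℝ} (h : IsBernoulli X) (ω : Ω) :
    |X ω| ≤ 1 := by rcases h.2 ω with h' | h' <;> simp [h']

/-- Factorization of the conditional (groupwise) natural direct effect under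
principal-strata invariance of the controlled direct effect within the
group `A = a`. `Y a m` is the potential outcome `I_{a,m}`. -/
theorem stmt_3 {Ω : Type*} [MeasurableSpace Ω] (P : Measure Ω) [IsProbabilityMeasure P]
    (A M1 : Ω → ℝ) (Y : Fin 2 → Fin 2 → Ω → ℝ)
    (hA : IsBernoulli A) (hM1 : IsBernoulli M1) (hY : ∀ a m, IsBernoulli (Y a m))
    (a : ℝ) (ha : a = 0 ∨ a = 1) (hpos : 0 < P {ω | A ω = a})
    (hinv : ∀ m : Fin 2, ∀ m1 ∈ ({0, 1} : Set ℝ),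
      0 < P {ω | M1 ω = m1 ∧ A ω = a} →
      cexp P (fun ω => Y 1 m ω - Y 0 m ω) {ω | M1 ω = m1 ∧ A ω = a}
        = cexp P (fun ω => Y 1 m ω - Y 0 m ω) {ω | A ω = a}) :
    cexp P (fun ω => (Y 1 1 ω * M1 ω + Y 1 0 ω * (1 - M1 ω))
        - (Y 0 1 ω * M1 ω + Y 0 0 ω * (1 - M1 ω))) {ω | A ω = a}
      = cexp P (fun ω => Y 1 0 ω - Y 0 0 ω) {ω | A ω = a}
          * (1 - cexp P M1 {ω | A ω = a})
        + cexp P (fun ω => Y 1 1 ω - Y 0 1 ω) {ω | A ω = a}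
          * cexp P M1 {ω | A ω = a} := by
  classical
  have hM1m : Measurable M1 := hM1.1
  set S : Set Ω := {ω | A ω = a} with hSdef
  have hSm : MeasurableSet S := hA.1 (measurableSet_singleton a)
  set T1 : Set Ω := {ω | M1 ω = 1} with hT1def
  set T0 : Set Ω := {ω | M1 ω = 0} with hT0def
  have hT1m : MeasurableSet T1 := hM1m (measurableSet_singleton 1)
  have hT0m : MeasurableSet T0 := hM1m (measurableSet_singleton 0)
  set D1 : Ω → ℝ := fun ω => Y 1 1 ω - Y 0 1 ω with hD1def
  set D0 : Ω → ℝ := fun ω => Y 1 0 ω - Y 0 0 ω with hD0def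
  have hD1m : Measurable D1 := (hY 1 1).1.sub (hY 0 1).1
  have hD0m : Measurable D0 := (hY 1 0).1.sub (hY 0 0).1
  have hD1b : ∀ ω, |D1 ω| ≤ 2 := fun ω => by
    have h1 := bern_abs (hY 1 1) ω; have h2 := bern_abs (hY 0 1) ω
    calc |D1 ω| ≤ |Y 1 1 ω| + |Y 0 1 ω| := abs_sub _ _
      _ ≤ 2 := by linarith
  have hD0b : ∀ ω, |D0 ω| ≤ 2 := fun ω => by
    have h1 := bern_abs (hY 1 0) ω; have h2 := bern_abs (hY 0 0) ω
    calc |D0 ω| ≤ |Y 1 0 ω| + |Y 0 0 ω| := abs_sub _ _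
      _ ≤ 2 := by linarith
  have hD1i : Integrable D1 P := integrable_of_bdd P hD1m 2 hD1b
  have hD0i : Integrable D0 P := integrable_of_bdd P hD0m 2 hD0b
  have hM1i : Integrable M1 P := integrable_of_bdd P hM1m 1 (bern_abs hM1)
  -- splitting products into set integrals
  have split1 : ∀ (f : Ω → ℝ), ∫ ω in S, f ω * M1 ω ∂P = ∫ ω in T1 ∩ S, f ω ∂P := by
    intro f
    have hind : (fun ω => f ω * M1 ω) = T1.indicator f := by
      funext ω
      rcases hM1.2 ω with h | h
      · simp [Set.indicator, hT1def, h]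
      · simp [Set.indicator, hT1def, h]
    rw [show (∫ ω in S, f ω * M1 ω ∂P) = ∫ ω in S, T1.indicator f ω ∂P from by rw [← hind],
      setIntegral_indicator hT1m, Set.inter_comm]
  have split0 : ∀ (f : Ω → ℝ), ∫ ω in S, f ω * (1 - M1 ω) ∂P = ∫ ω in T0 ∩ S, f ω ∂P := by
    intro f
    have hind : (fun ω => f ω * (1 - M1 ω)) = T0.indicator f := by
      funext ω
      rcases hM1.2 ω with h | h
      · simp [Set.indicator, hT0def, h]
      · simp [Set.indicator, hT0def, h]
    rw [show (∫ ω in S, f ω * (1 - M1 ω) ∂P) = ∫ ω in S, T0.indicator f ω ∂P from by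
        rw [← hind], setIntegral_indicator hT0m, Set.inter_comm]
  have pS := (P S).toReal
  have hpSne : (P S).toReal ≠ 0 :=
    ENNReal.toReal_ne_zero.mpr ⟨hpos.ne', measure_ne_top _ _⟩
  -- integral of M1 over S
  have hIM1 : ∫ ω in S, M1 ω ∂P = (P (T1 ∩ S)).toReal := by
    have := split1 (fun _ => (1 : ℝ))
    simp only [one_mul] at this
    rw [this, setIntegral_const, smul_eq_mul, mul_one]; rfl
  -- integral of (1 - M1) over S
  have hI1M1 : ∫ ω in S, (1 - M1 ω) ∂P = (P (T0 ∩ S)).toReal := by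
    have := split0 (fun _ => (1 : ℝ))
    simp only [one_mul] at this
    rw [this, setIntegral_const, smul_eq_mul, mul_one]; rfl
  have hp0 : (P (T0 ∩ S)).toReal = (P S).toReal - (P (T1 ∩ S)).toReal := by
    rw [← hI1M1, ← hIM1]
    rw [integral_sub (integrable_const 1) (hM1i.restrict)]
    simp
    rfl
  -- key identities from invariance
  have key : ∀ (m : Fin 2) (m1 : ℝ), m1 ∈ ({0, 1} : Set ℝ) → ∀ T : Set Ω,
      {ω | M1 ω = m1 ∧ A ω = a} = T ∩ S →
      ∫ ω in T ∩ S, (Y 1 m ω - Y 0 m ω) ∂P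
        = cexp P (fun ω => Y 1 m ω - Y 0 m ω) S * (P (T ∩ S)).toReal := by
    intro m m1 hm1 T hTeq
    by_cases hp : P (T ∩ S) = 0
    · have h0 : P.restrict (T ∩ S) = 0 := Measure.restrict_eq_zero.mpr hp
      rw [h0, hp]; simp
    · have hposE : 0 < P {ω | M1 ω = m1 ∧ A ω = a} := by
        rw [hTeq]; exact lt_of_le_of_ne (by simp) (Ne.symm hp)
      have hi := hinv m m1 hm1 hposE
      rw [hTeq] at hi
      have hne : (P (T ∩ S)).toReal ≠ 0 :=
        ENNReal.toReal_ne_zero.mpr ⟨hp, measure_ne_top _ _⟩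
      rw [cexp] at hi
      rw [← hi, div_mul_cancel₀ _ hne]
  have hE1 : {ω | M1 ω = 1 ∧ A ω = a} = T1 ∩ S := rfl
  have hE0 : {ω | M1 ω = 0 ∧ A ω = a} = T0 ∩ S := rfl
  have key1 := key 1 1 (by simp) T1 hE1
  have key0 := key 0 0 (by simp) T0 hE0
  -- split the big integral
  have hbig : ∫ ω in S, ((Y 1 1 ω * M1 ω + Y 1 0 ω * (1 - M1 ω))
        - (Y 0 1 ω * M1 ω + Y 0 0 ω * (1 - M1 ω))) ∂P
      = (∫ ω in S, D1 ω * M1 ω ∂P) + ∫ ω in S, D0 ω * (1 - M1 ω) ∂P := by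
    rw [← integral_add (f := fun ω => D1 ω * M1 ω) (g := fun ω => D0 ω * (1 - M1 ω))
      ((integrable_of_bdd P (hD1m.mul hM1m) 2 (fun ω => by
        have := hD1b ω; have := bern_abs hM1 ω
        calc |D1 ω * M1 ω| = |D1 ω| * |M1 ω| := abs_mul _ _
          _ ≤ 2 * 1 := by gcongr
          _ = 2 := by norm_num)).restrict)
      ((integrable_of_bdd P (hD0m.mul ((measurable_const.sub hM1m))) 2 (fun ω => by
        have := hD0b ω
        have h2 : |1 - M1 ω| ≤ 1 := by rcases hM1.2 ω with h | h <;> simp [h]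
        calc |D0 ω * (1 - M1 ω)| = |D0 ω| * |1 - M1 ω| := abs_mul _ _
          _ ≤ 2 * 1 := by gcongr
          _ = 2 := by norm_num)).restrict)]
    congr 1
    funext ω
    simp only [hD1def, hD0def]
    ring
  have hIbig : ∫ ω in S, ((Y 1 1 ω * M1 ω + Y 1 0 ω * (1 - M1 ω))
        - (Y 0 1 ω * M1 ω + Y 0 0 ω * (1 - M1 ω))) ∂P
      = cexp P D1 S * (P (T1 ∩ S)).toReal + cexp P D0 S * (P (T0 ∩ S)).toReal := by
    rw [hbig, split1 D1, split0 D0, key1, key0]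
  simp only [cexp] at *
  rw [hIbig, hIM1, hp0]
  field_simp
  ring
end

section
/- Let A, M be Bernoulli random variables (exposure and mediator), let Y_{a,m} for a, m ∈ {0,1} be Bernoulli random variables (the potential outcomes I_{a,m}), and let L : Ω → S be a measurable confounder taking values in a finite set S. Define the observed outcome by consistency: I := Σ_{a,m ∈ {0,1}} Y_{a,m}·1{A = a}·1{M = m} (pointwise). Fix a, m ∈ {0,1}. Assume positivity: for every l ∈ S with P(L = l) > 0 one has P(A = a, M = m, L = l) > 0, and assume ignorability as conditional mean independence: for every such l, E[Y_{a,m} | A = a, M = m, L = l] = E[Y_{a,m} | L = l]. Then the g-formula identifies the mean potential outcome: E[Y_{a,m}] = Σ_{l ∈ S, P(L = l) > 0} E[I | A = a, M = m, L = l] · P(L = l). -/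
open MeasureTheory
open scoped Classical

/-- The g-formula identifies the mean potential outcome `E[Y_{a,m}]` under
consistency, positivity, and ignorability (as conditional mean independence),
with a finitely-valued measurable confounder `L`. `Y a m` is the potential
outcome `I_{a,m}`, and the observed outcome is
`I = Σ_{a,m} Y_{a,m}·1{A = a}·1{M = m}`. -/
theorem stmt_11 {Ω S : Type*} [MeasurableSpace Ω] [MeasurableSpace S]
    [MeasurableSingletonClass S] [Fintype S]
    (P : Measure Ω) [IsProbabilityMeasure P]
    (A M : Ω → ℝ) (Y : Fin 2 → Fin 2 → Ω → ℝ) (I : Ω → ℝ) (L : Ω → S)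
    (hA : IsBernoulli A) (hM : IsBernoulli M) (hY : ∀ a m, IsBernoulli (Y a m))
    (hL : Measurable L)
    (hI : ∀ ω, I ω = ∑ a' : Fin 2, ∑ m' : Fin 2,
      Y a' m' ω * (if A ω = (a'.val : ℝ) then 1 else 0)
        * (if M ω = (m'.val : ℝ) then 1 else 0))
    (a m : Fin 2)
    (hpos : ∀ l : S, 0 < P {ω | L ω = l} →
      0 < P {ω | A ω = (a.val : ℝ) ∧ M ω = (m.val : ℝ) ∧ L ω = l})
    (hign : ∀ l : S, 0 < P {ω | A ω = (a.val : ℝ) ∧ M ω = (m.val : ℝ) ∧ L ω = l} →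
      cexp P (Y a m) {ω | A ω = (a.val : ℝ) ∧ M ω = (m.val : ℝ) ∧ L ω = l}
        = cexp P (Y a m) {ω | L ω = l}) :
    ∫ ω, Y a m ω ∂P
      = ∑ l : S, if 0 < P {ω | L ω = l} then
          cexp P I {ω | A ω = (a.val : ℝ) ∧ M ω = (m.val : ℝ) ∧ L ω = l}
            * (P {ω | L ω = l}).toReal
        else 0 := by
  classical
  set f := Y a m with hfdef
  have hfm : Measurable f := (hY a m).1
  have hfb : ∀ ω, ‖f ω‖ ≤ 1 := by
    intro ω; rcases (hY a m).2 ω with h | h <;> simp [hfdef, h]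
  have hint : Integrable f P :=
    (integrable_const (1 : ℝ)).mono' hfm.aestronglyMeasurable
      (Filter.Eventually.of_forall hfb)
  have hLset : ∀ l : S, MeasurableSet {ω | L ω = l} :=
    fun l => hL (measurableSet_singleton l)
  have hEset : ∀ l : S,
      MeasurableSet {ω | A ω = (a.val : ℝ) ∧ M ω = (m.val : ℝ) ∧ L ω = l} := by
    intro l
    have h1 : MeasurableSet {ω | A ω = (a.val : ℝ)} :=
      hA.1 (measurableSet_singleton _)
    have h2 : MeasurableSet {ω | M ω = (m.val : ℝ)} :=
      hM.1 (measurableSet_singleton _)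
    have : {ω | A ω = (a.val : ℝ) ∧ M ω = (m.val : ℝ) ∧ L ω = l}
        = {ω | A ω = (a.val : ℝ)} ∩ ({ω | M ω = (m.val : ℝ)} ∩ {ω | L ω = l}) := by
      ext ω; simp [Set.mem_setOf_eq, and_assoc]
    rw [this]
    exact h1.inter (h2.inter (hLset l))
  -- On E_l, I = f
  have hIf : ∀ l : S, Set.EqOn I f
      {ω | A ω = (a.val : ℝ) ∧ M ω = (m.val : ℝ) ∧ L ω = l} := by
    intro l ω hω
    obtain ⟨hAω, hMω, -⟩ := hω
    rw [hI ω, hfdef]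
    fin_cases a <;> fin_cases m <;>
      norm_num [Fin.sum_univ_two, hAω, hMω]
  have key : ∀ l : S, (∫ ω in {ω | L ω = l}, f ω ∂P)
      = if 0 < P {ω | L ω = l} then
          cexp P I {ω | A ω = (a.val : ℝ) ∧ M ω = (m.val : ℝ) ∧ L ω = l}
            * (P {ω | L ω = l}).toReal
        else 0 := by
    intro l
    by_cases h : 0 < P {ω | L ω = l}
    · rw [if_pos h]
      have hE := hpos l h
      have hcI : cexp P I {ω | A ω = (a.val : ℝ) ∧ M ω = (m.val : ℝ) ∧ L ω = l}
          = cexp P f {ω | A ω = (a.val : ℝ) ∧ M ω = (m.val : ℝ) ∧ L ω = l} := by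
        unfold cexp
        rw [setIntegral_congr_fun (hEset l) (hIf l)]
      rw [hcI, hign l hE]
      unfold cexp
      have hne : (P {ω | L ω = l}).toReal ≠ 0 := by
        have := measure_ne_top P {ω | L ω = l}
        simp [ENNReal.toReal_eq_zero_iff, h.ne', this]
      field_simp
    · rw [if_neg h]
      have h0 : P {ω | L ω = l} = 0 := le_antisymm (not_lt.mp h) zero_le
      exact setIntegral_measure_zero _ h0
  have hcover : ∀ ω, f ω = ∑ l : S, Set.indicator {ω | L ω = l} f ω := by
    intro ω
    rw [Finset.sum_eq_single (L ω)]
    · simp [Set.indicator_of_mem, Set.mem_setOf_eq]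
    · intro b _ hb
      exact Set.indicator_of_notMem (by simp [Set.mem_setOf_eq, Ne.symm hb]) f
    · simp
  calc ∫ ω, f ω ∂P
      = ∫ ω, ∑ l : S, Set.indicator {ω | L ω = l} f ω ∂P := by
        exact integral_congr_ae (Filter.Eventually.of_forall hcover)
    _ = ∑ l : S, ∫ ω, Set.indicator {ω | L ω = l} f ω ∂P :=
        integral_finset_sum _ (fun l _ => hint.indicator (hLset l))
    _ = ∑ l : S, ∫ ω in {ω | L ω = l}, f ω ∂P := by
        refine Finset.sum_congr rfl fun l _ => ?_
        exact integral_indicator (hLset l)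
    _ = _ := Finset.sum_congr rfl fun l _ => key l
end

section
/- Let A, M₀, M₁ be Bernoulli random variables and let L : Ω → S be a measurable confounder taking values in a finite set S. Define the observed mediator by consistency: M := M₁·1{A = 1} + M₀·1{A = 0} (pointwise). Fix a ∈ {0,1} and assume P(A = 1 − a) > 0. Assume positivity: for every l ∈ S with P(A = 1 − a, L = l) > 0 one has P(A = a, L = l) > 0, and assume treatment ignorability as conditional mean independence: for every l ∈ S and a' ∈ {0,1} with P(A = a', L = l) > 0, E[M_a | A = a', L = l] = E[M_a | L = l]. Then the cross-group mean potential mediator is identified: E[M_a | A = 1 − a] = Σ_{l ∈ S, P(A = 1 − a, L = l) > 0} E[M | A = a, L = l] · P(L = l | A = 1 − a). -/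
open MeasureTheory
open scoped Classical

/-- Conditional probability of the event `F` given the event `E`: `P(F ∩ E)/P(E)`. -/
noncomputable def cprob {Ω : Type*} [MeasurableSpace Ω] (P : Measure Ω)
    (F E : Set Ω) : ℝ :=
  (P (F ∩ E)).toReal / (P E).toReal

/-- Identification of the cross-group mean potential mediator
`E[M_a | A = 1 − a]` under consistency, positivity, and treatment ignorability
(as conditional mean independence). `Mpot a` is the potential mediator `M_a`,
and the observed mediator is `M = M₁·1{A = 1} + M₀·1{A = 0}`. -/
theorem stmt_12 {Ω S : Type*} [MeasurableSpace Ω] [MeasurableSpace S]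
    [MeasurableSingletonClass S] [Fintype S]
    (P : Measure Ω) [IsProbabilityMeasure P]
    (A : Ω → ℝ) (Mpot : Fin 2 → Ω → ℝ) (M : Ω → ℝ) (L : Ω → S)
    (hA : IsBernoulli A) (hMpot : ∀ a, IsBernoulli (Mpot a)) (hL : Measurable L)
    (hM : ∀ ω, M ω = Mpot 1 ω * (if A ω = 1 then 1 else 0)
      + Mpot 0 ω * (if A ω = 0 then 1 else 0))
    (a : Fin 2)
    (hposA : 0 < P {ω | A ω = 1 - (a.val : ℝ)})
    (hpos : ∀ l : S, 0 < P {ω | A ω = 1 - (a.val : ℝ) ∧ L ω = l} →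
      0 < P {ω | A ω = (a.val : ℝ) ∧ L ω = l})
    (hign : ∀ l : S, ∀ a' : Fin 2, 0 < P {ω | A ω = (a'.val : ℝ) ∧ L ω = l} →
      cexp P (Mpot a) {ω | A ω = (a'.val : ℝ) ∧ L ω = l}
        = cexp P (Mpot a) {ω | L ω = l}) :
    cexp P (Mpot a) {ω | A ω = 1 - (a.val : ℝ)}
      = ∑ l : S, if 0 < P {ω | A ω = 1 - (a.val : ℝ) ∧ L ω = l} then
          cexp P M {ω | A ω = (a.val : ℝ) ∧ L ω = l}
            * cprob P {ω | L ω = l} {ω | A ω = 1 - (a.val : ℝ)}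
        else 0 := by

  classical
  obtain ⟨hAm, hA01⟩ := hA
  obtain ⟨hMm, hM01⟩ := hMpot a
  set c : ℝ := 1 - (a.val : ℝ) with hc
  set b : ℝ := (a.val : ℝ) with hb
  -- measurability
  have hEA : ∀ r : ℝ, MeasurableSet {ω | A ω = r} := fun r =>
    hAm (measurableSet_singleton r)
  have hEL : ∀ l : S, MeasurableSet {ω | L ω = l} := fun l =>
    hL (measurableSet_singleton l)
  have hEcl : ∀ l : S, MeasurableSet {ω | A ω = c ∧ L ω = l} := fun l => by
    have : {ω | A ω = c ∧ L ω = l} = {ω | A ω = c} ∩ {ω | L ω = l} := rfl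
    rw [this]; exact (hEA c).inter (hEL l)
  have hEbl : ∀ l : S, MeasurableSet {ω | A ω = b ∧ L ω = l} := fun l => by
    have : {ω | A ω = b ∧ L ω = l} = {ω | A ω = b} ∩ {ω | L ω = l} := rfl
    rw [this]; exact (hEA b).inter (hEL l)
  -- integrability
  have hint : Integrable (Mpot a) P := by
    refine (integrable_const (1:ℝ)).mono' hMm.aestronglyMeasurable ?_
    filter_upwards with ω
    rcases hM01 ω with h | h <;> simp [h]
  -- a' corresponding to 1 - a
  have hca : ((1 - a : Fin 2).val : ℝ) = c := by
    fin_cases a <;> simp [hc, hb] <;> norm_num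
  -- M = Mpot a on {A = b}
  have hMa : ∀ ω, A ω = b → M ω = Mpot a ω := by
    intro ω h
    fin_cases a <;> simp only [hb] at h <;>
      simp [hM ω, h] <;> norm_num
  -- notation
  set D : ℝ := (P {ω | A ω = c}).toReal with hD
  have hDpos : 0 < D := ENNReal.toReal_pos hposA.ne' (measure_ne_top P _)
  set I : S → ℝ := fun l => ∫ ω in {ω | A ω = c ∧ L ω = l}, Mpot a ω ∂P with hI
  -- decomposition of the integral
  have hdecomp : (∫ ω in {ω | A ω = c}, Mpot a ω ∂P) = ∑ l : S, I l := by
    have hun : {ω | A ω = c} = ⋃ l ∈ (Finset.univ : Finset S),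
        {ω | A ω = c ∧ L ω = l} := by
      ext ω; simp
    rw [hun]
    rw [MeasureTheory.integral_biUnion_finset]
    · intro l _; exact hEcl l
    · intro l _ l' _ hll'
      simp only [Function.onFun, Set.disjoint_left]
      rintro ω ⟨_, h1⟩ ⟨_, h2⟩
      exact hll' (h1 ▸ h2 ▸ rfl)
    · intro l _; exact hint.integrableOn
  -- per-term identity
  have hterm : ∀ l : S,
      (if 0 < P {ω | A ω = c ∧ L ω = l} then
        cexp P M {ω | A ω = b ∧ L ω = l} * cprob P {ω | L ω = l} {ω | A ω = c}
      else 0) = I l / D := by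
    intro l
    by_cases hl : 0 < P {ω | A ω = c ∧ L ω = l}
    · rw [if_pos hl]
      have hbl := hpos l hl
      have hclR : (0:ℝ) < (P {ω | A ω = c ∧ L ω = l}).toReal :=
        ENNReal.toReal_pos hl.ne' (measure_ne_top P _)
      -- cexp of M on {A=b,L=l} equals cexp of Mpot a there
      have hMeq : cexp P M {ω | A ω = b ∧ L ω = l}
          = cexp P (Mpot a) {ω | A ω = b ∧ L ω = l} := by
        unfold cexp
        congr 1
        refine setIntegral_congr_fun (hEbl l) ?_
        intro ω hω
        exact hMa ω hω.1
      -- ignorability chain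
      have hign1 := hign l a (by rwa [← hb])
      have hign2 := hign l (1 - a) (by rwa [hca])
      have hchain : cexp P (Mpot a) {ω | A ω = b ∧ L ω = l}
          = cexp P (Mpot a) {ω | A ω = c ∧ L ω = l} := by
        rw [← hb] at hign1
        rw [hca] at hign2
        rw [hign1, ← hign2]
      have hcprob : cprob P {ω | L ω = l} {ω | A ω = c}
          = (P {ω | A ω = c ∧ L ω = l}).toReal / D := by
        have hset : {ω | L ω = l} ∩ {ω | A ω = c} = {ω | A ω = c ∧ L ω = l} := by
          ext ω; exact and_comm
        unfold cprob
        rw [hset, hD]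
      rw [hMeq, hchain, hcprob]
      unfold cexp
      rw [hI]
      field_simp
      try ring
    · rw [if_neg hl]
      have h0 : P {ω | A ω = c ∧ L ω = l} = 0 := by
        by_contra h; exact hl (lt_of_le_of_ne zero_le (Ne.symm h))
      have : I l = 0 := by
        simp only [hI]
        rw [Measure.restrict_eq_zero.mpr h0, integral_zero_measure]
      rw [this, zero_div]
  -- conclude
  unfold cexp
  rw [hdecomp, ← hD]
  rw [Finset.sum_div]
  refine Finset.sum_congr rfl ?_
  intro l _
  exact (hterm l).symm
end

section
/- Let A, M be Bernoulli random variables (exposure and mediator), let Y_{a,m} for a, m ∈ {0,1} be Bernoulli random variables (the potential outcomes I_{a,m}), and let L : Ω → S be a measurable confounder taking values in a finite set S. Define the observed outcome by consistency: I := Σ_{a,m ∈ {0,1}} Y_{a,m}·1{A = a}·1{M = m} (pointwise). Fix a, m ∈ {0,1} and assume P(A = 1 − a) > 0. Assume positivity: for every l ∈ S with P(A = 1 − a, L = l) > 0 one has P(A = a, M = m, L = l) > 0, and assume ignorability as conditional mean independence: for every l ∈ S and every a' ∈ {0,1}, m' ∈ {0,1} with P(A = a', M = m', L = l) > 0, E[Y_{a,m}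 | A = a', M = m', L = l] = E[Y_{a,m} | L = l], and for every l with P(A = a', L = l) > 0, E[Y_{a,m} | A = a', L = l] = E[Y_{a,m} | L = l]. Then the cross-group mean potential outcome is identified: E[Y_{a,m} | A = 1 − a] = Σ_{l ∈ S, P(A = 1 − a, L = l) > 0} E[I | A = a, M = m, L = l] · P(L = l | A = 1 − a). -/
open MeasureTheory
open scoped Classical

/-- Identification of the cross-group mean potential outcome
`E[Y_{a,m} | A = 1 − a]` under consistency, positivity, and ignorability
(as conditional mean independence). `Y a m` is the potential outcome
`I_{a,m}`, and the observed outcome is `I = Σ_{a,m} Y_{a,m}·1{A = a}·1{M = m}`. -/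
theorem stmt_13 {Ω S : Type*} [MeasurableSpace Ω] [MeasurableSpace S]
    [MeasurableSingletonClass S] [Fintype S]
    (P : Measure Ω) [IsProbabilityMeasure P]
    (A M : Ω → ℝ) (Y : Fin 2 → Fin 2 → Ω → ℝ) (I : Ω → ℝ) (L : Ω → S)
    (hA : IsBernoulli A) (hM : IsBernoulli M) (hY : ∀ a m, IsBernoulli (Y a m))
    (hL : Measurable L)
    (hI : ∀ ω, I ω = ∑ a' : Fin 2, ∑ m' : Fin 2,
      Y a' m' ω * (if A ω = (a'.val : ℝ) then 1 else 0)
        * (if M ω = (m'.val : ℝ) then 1 else 0))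
    (a m : Fin 2)
    (hposA : 0 < P {ω | A ω = 1 - (a.val : ℝ)})
    (hpos : ∀ l : S, 0 < P {ω | A ω = 1 - (a.val : ℝ) ∧ L ω = l} →
      0 < P {ω | A ω = (a.val : ℝ) ∧ M ω = (m.val : ℝ) ∧ L ω = l})
    (hign : ∀ l : S, ∀ a' m' : Fin 2,
      0 < P {ω | A ω = (a'.val : ℝ) ∧ M ω = (m'.val : ℝ) ∧ L ω = l} →
      cexp P (Y a m) {ω | A ω = (a'.val : ℝ) ∧ M ω = (m'.val : ℝ) ∧ L ω = l}
        = cexp P (Y a m) {ω | L ω = l})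
    (hign' : ∀ l : S, ∀ a' : Fin 2,
      0 < P {ω | A ω = (a'.val : ℝ) ∧ L ω = l} →
      cexp P (Y a m) {ω | A ω = (a'.val : ℝ) ∧ L ω = l}
        = cexp P (Y a m) {ω | L ω = l}) :
    cexp P (Y a m) {ω | A ω = 1 - (a.val : ℝ)}
      = ∑ l : S, if 0 < P {ω | A ω = 1 - (a.val : ℝ) ∧ L ω = l} then
          cexp P I {ω | A ω = (a.val : ℝ) ∧ M ω = (m.val : ℝ) ∧ L ω = l}
            * cprob P {ω | L ω = l} {ω | A ω = 1 - (a.val : ℝ)}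
        else 0 := by
  classical
  have hbval : (((1 - a : Fin 2).val : ℝ)) = 1 - (a.val : ℝ) := by
    fin_cases a <;> norm_num
  -- measurability
  have msetA : ∀ c : ℝ, MeasurableSet {ω | A ω = c} := fun c =>
    hA.1 (measurableSet_singleton c)
  have msetL : ∀ l : S, MeasurableSet {ω | L ω = l} := fun l =>
    hL (measurableSet_singleton l)
  have msetAL : ∀ l : S, MeasurableSet {ω | A ω = 1 - (a.val : ℝ) ∧ L ω = l} := fun l =>
    (msetA _).inter (msetL l)
  have msetAML : ∀ l : S,
      MeasurableSet {ω | A ω = (a.val : ℝ) ∧ M ω = (m.val : ℝ) ∧ L ω = l} := fun l =>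
    (msetA _).inter ((hM.1 (measurableSet_singleton _)).inter (msetL l))
  -- integrability
  have hint : Integrable (Y a m) P := by
    refine Integrable.mono' (integrable_const 1) (hY a m).1.aestronglyMeasurable ?_
    filter_upwards with ω
    rcases (hY a m).2 ω with h | h <;> simp [h]
  -- decomposition of the integral over {A = 1-a} into fibers of L
  have hdecomp : (∫ ω in {ω | A ω = 1 - (a.val : ℝ)}, Y a m ω ∂P)
      = ∑ l : S, ∫ ω in {ω | A ω = 1 - (a.val : ℝ) ∧ L ω = l}, Y a m ω ∂P := by
    have hU : {ω | A ω = 1 - (a.val : ℝ)}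
        = ⋃ l : S, {ω | A ω = 1 - (a.val : ℝ) ∧ L ω = l} := by
      ext ω; simp
    rw [hU, integral_iUnion msetAL ?_ hint.integrableOn, tsum_fintype]
    intro l l' hll'
    rw [Function.onFun, Set.disjoint_left]
    rintro ω ⟨-, h1⟩ ⟨-, h2⟩
    exact hll' (h1 ▸ h2 ▸ rfl)
  have hPA : (P {ω | A ω = 1 - (a.val : ℝ)}).toReal ≠ 0 :=
    (ENNReal.toReal_pos hposA.ne' (measure_ne_top _ _)).ne'
  rw [cexp, hdecomp, Finset.sum_div]
  refine Finset.sum_congr rfl fun l _ => ?_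
  by_cases hl : 0 < P {ω | A ω = 1 - (a.val : ℝ) ∧ L ω = l}
  · rw [if_pos hl]
    -- I = Y a m on the event {A = a, M = m, L = l}
    have hIeq : Set.EqOn I (Y a m)
        {ω | A ω = (a.val : ℝ) ∧ M ω = (m.val : ℝ) ∧ L ω = l} := by
      rintro ω ⟨h1, h2, -⟩
      rw [hI ω]
      fin_cases a <;> fin_cases m <;>
        simp_all [Fin.sum_univ_two]
    have h1 : cexp P I {ω | A ω = (a.val : ℝ) ∧ M ω = (m.val : ℝ) ∧ L ω = l}
        = cexp P (Y a m) {ω | A ω = (a.val : ℝ) ∧ M ω = (m.val : ℝ) ∧ L ω = l} := by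
      unfold cexp
      rw [setIntegral_congr_fun (msetAML l) hIeq]
    have h2 := hign l a m (hpos l hl)
    have hl' : 0 < P {ω | A ω = (((1 - a : Fin 2).val : ℝ)) ∧ L ω = l} := by
      rw [hbval]; exact hl
    have h3 := hign' l (1 - a) hl'
    rw [hbval] at h3
    rw [h1, h2, ← h3]
    -- now both sides in terms of the set {A = 1-a ∧ L = l}
    have hsets : {ω | L ω = l} ∩ {ω | A ω = 1 - (a.val : ℝ)}
        = {ω | A ω = 1 - (a.val : ℝ) ∧ L ω = l} := by
      ext ω; exact and_comm
    have hPl : (P {ω | A ω = 1 - (a.val : ℝ) ∧ L ω = l}).toReal ≠ 0 :=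
      (ENNReal.toReal_pos hl.ne' (measure_ne_top _ _)).ne'
    rw [cexp, cprob, hsets]
    field_simp
  · rw [if_neg hl]
    have h0 : P {ω | A ω = 1 - (a.val : ℝ) ∧ L ω = l} = 0 := by
      simpa using (not_lt.mp hl)
    rw [Measure.restrict_eq_zero.mpr h0, integral_zero_measure, zero_div]
end

section
/- Let A, M₀, M₁ be Bernoulli random variables and Y₀₀, Y₀₁ be Bernoulli random variables (the potential outcomes I_{0,0} and I_{0,1}). Define the observed mediator and outcome by consistency: M := M₁·1{A = 1} + M₀·1{A = 0} and, on the event A = 0, I := Y₀₁·1{M = 1} + Y₀₀·1{M = 0} (pointwise on {A = 0}). Assume: (i) treatment ignorability with no measured confounders, i.e. the random vector (M₀, M₁, Y₀₀, Y₀₁) is independent of A; (ii) principal ignorability: for every m ∈ {0,1} and every m₀, m₁ ∈ {0,1} with P(M₀ = m₀, M₁ = m₁) > 0, E[Y_{0,m} | M₀ = m₀, M₁ = m₁] = E[Y_{0,m}]; (iii) positivity: P(A = 1) > 0, P(A = 0, M = 1) > 0 and P(A = 0, M = 0) > 0. Then the mediation formula holds: the natural indirect effect E[I_{0,M₁} −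 I_{0,M₀}] equals (E[M | A = 1] − E[M | A = 0]) · (E[I | A = 0, M = 1] − E[I | A = 0, M = 0]). -/
open MeasureTheory ProbabilityTheory
open scoped Classical

lemma aux_ind {Ω : Type*} [MeasurableSpace Ω] (P : Measure Ω)
    (X g : Ω → ℝ) (S : Set Ω) (hS : MeasurableSet S)
    (h : ∀ ω, g ω = if ω ∈ S then X ω else 0) :
    ∫ ω, g ω ∂P = ∫ ω in S, X ω ∂P := by
  have hg : g = S.indicator X := funext fun ω => by
    rw [h ω]; by_cases hω : ω ∈ S <;> simp [Set.indicator_apply, hω]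
  rw [hg, integral_indicator hS]

lemma aux_int {Ω : Type*} [MeasurableSpace Ω] (P : Measure Ω) [IsProbabilityMeasure P]
    {X : Ω → ℝ} (hX : IsBernoulli X) : Integrable X P :=
  (integrable_const (1:ℝ)).mono' hX.1.aestronglyMeasurable
    (ae_of_all _ fun ω => by rcases hX.2 ω with h|h <;> simp [h])

lemma aux_mul {Ω : Type*} [MeasurableSpace Ω] {X Y : Ω → ℝ}
    (hX : IsBernoulli X) (hY : IsBernoulli Y) : IsBernoulli (fun ω => X ω * Y ω) :=
  ⟨hX.1.mul hY.1, fun ω => by rcases hX.2 ω with h|h <;> rcases hY.2 ω with h'|h' <;> simp [h,h']⟩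

lemma aux_sub {Ω : Type*} [MeasurableSpace Ω] {X : Ω → ℝ}
    (hX : IsBernoulli X) : IsBernoulli (fun ω => 1 - X ω) :=
  ⟨measurable_const.sub hX.1, fun ω => by rcases hX.2 ω with h|h <;> simp [h]⟩

/-- The mediation formula: under treatment ignorability (independence of the
vector of potential mediators and outcomes from the exposure), principal
ignorability, consistency, and positivity, the natural indirect effect
`E[I_{0,M₁} − I_{0,M₀}]` equals
`(E[M | A = 1] − E[M | A = 0])·(E[I | A = 0, M = 1] − E[I | A = 0, M = 0])`. -/
theorem stmt_14 {Ω : Type*} [MeasurableSpace Ω] (P : Measure Ω) [IsProbabilityMeasure P]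
    (A M0 M1 Y00 Y01 M I : Ω → ℝ)
    (hA : IsBernoulli A) (hM0 : IsBernoulli M0) (hM1 : IsBernoulli M1)
    (hY00 : IsBernoulli Y00) (hY01 : IsBernoulli Y01)
    (hM : ∀ ω, M ω = M1 ω * (if A ω = 1 then 1 else 0)
      + M0 ω * (if A ω = 0 then 1 else 0))
    (hI : ∀ ω, A ω = 0 → I ω = Y01 ω * (if M ω = 1 then 1 else 0)
      + Y00 ω * (if M ω = 0 then 1 else 0))
    (hindep : IndepFun (fun ω => (M0 ω, M1 ω, Y00 ω, Y01 ω)) A P)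
    (hPI : ∀ Z : Ω → ℝ, (Z = Y00 ∨ Z = Y01) →
      ∀ m0 ∈ ({0, 1} : Set ℝ), ∀ m1 ∈ ({0, 1} : Set ℝ),
      0 < P {ω | M0 ω = m0 ∧ M1 ω = m1} →
      cexp P Z {ω | M0 ω = m0 ∧ M1 ω = m1} = ∫ ω, Z ω ∂P)
    (hposA : 0 < P {ω | A ω = 1})
    (hpos1 : 0 < P {ω | A ω = 0 ∧ M ω = 1})
    (hpos0 : 0 < P {ω | A ω = 0 ∧ M ω = 0}) :
    ∫ ω, ((Y01 ω * M1 ω + Y00 ω * (1 - M1 ω))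
        - (Y01 ω * M0 ω + Y00 ω * (1 - M0 ω))) ∂P
      = (cexp P M {ω | A ω = 1} - cexp P M {ω | A ω = 0})
        * (cexp P I {ω | A ω = 0 ∧ M ω = 1} - cexp P I {ω | A ω = 0 ∧ M ω = 0}) := by
  -- measurability of M
  have hMfun : M = fun ω => M1 ω * (if A ω = 1 then 1 else 0)
      + M0 ω * (if A ω = 0 then 1 else 0) := funext hM
  have hMmeas : Measurable M := by
    rw [hMfun]
    exact (hM1.1.mul (Measurable.ite (hA.1 (measurableSet_singleton 1))
        measurable_const measurable_const)).add
      (hM0.1.mul (Measurable.ite (hA.1 (measurableSet_singleton 0))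
        measurable_const measurable_const))
  -- measurable sets
  have mT1 : MeasurableSet {ω | A ω = 1} := hA.1 (measurableSet_singleton 1)
  have mT0 : MeasurableSet {ω | A ω = 0} := hA.1 (measurableSet_singleton 0)
  have mU1 : MeasurableSet {ω | A ω = 0 ∧ M ω = 1} :=
    mT0.inter (hMmeas (measurableSet_singleton 1))
  have mU0 : MeasurableSet {ω | A ω = 0 ∧ M ω = 0} :=
    mT0.inter (hMmeas (measurableSet_singleton 0))
  have mS : ∀ m0 m1 : ℝ, MeasurableSet {ω | M0 ω = m0 ∧ M1 ω = m1} := fun m0 m1 =>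
    (hM0.1 (measurableSet_singleton m0)).inter (hM1.1 (measurableSet_singleton m1))
  -- principal ignorability: integral form, covering null strata
  have PIint : ∀ Z : Ω → ℝ, (Z = Y00 ∨ Z = Y01) → ∀ m0 m1 : ℝ,
      (m0 = 0 ∨ m0 = 1) → (m1 = 0 ∨ m1 = 1) →
      ∫ ω in {ω | M0 ω = m0 ∧ M1 ω = m1}, Z ω ∂P
        = (∫ ω, Z ω ∂P) * (P {ω | M0 ω = m0 ∧ M1 ω = m1}).toReal := by
    intro Z hZ m0 m1 hm0 hm1
    by_cases hp : P {ω | M0 ω = m0 ∧ M1 ω = m1} = 0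
    · rw [hp, Measure.restrict_eq_zero.mpr hp, integral_zero_measure]
      simp
    · have hpos : 0 < P {ω | M0 ω = m0 ∧ M1 ω = m1} := pos_iff_ne_zero.mpr hp
      have := hPI Z hZ m0 (by rcases hm0 with h|h <;> simp [h]) m1
        (by rcases hm1 with h|h <;> simp [h]) hpos
      unfold cexp at this
      have ht : (P {ω | M0 ω = m0 ∧ M1 ω = m1}).toReal ≠ 0 :=
        (ENNReal.toReal_pos hp (measure_ne_top P _)).ne'
      rw [div_eq_iff ht] at this
      exact this
  -- integrability
  have iA := aux_int P hA
  have iM0 := aux_int P hM0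
  have iM1 := aux_int P hM1
  have iY00 := aux_int P hY00
  have iY01 := aux_int P hY01
  have iB : ∀ {X Y : Ω → ℝ}, IsBernoulli X → IsBernoulli Y →
      Integrable (fun ω => X ω * Y ω) P := fun hX hY => aux_int P (aux_mul hX hY)
  have isub : ∀ (f g : Ω → ℝ), Integrable f P → Integrable g P →
      Integrable (fun ω => f ω - g ω) P := fun f g hf hg => hf.sub hg
  -- independence multiplication
  have hvec : Measurable (fun ω => (M0 ω, M1 ω, Y00 ω, Y01 ω)) :=
    hM0.1.prodMk (hM1.1.prodMk (hY00.1.prodMk hY01.1))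
  have indepMul : ∀ f : ℝ × ℝ × ℝ × ℝ → ℝ, Measurable f →
      (∫ ω, f (M0 ω, M1 ω, Y00 ω, Y01 ω) * A ω ∂P)
        = (∫ ω, f (M0 ω, M1 ω, Y00 ω, Y01 ω) ∂P) * ∫ ω, A ω ∂P := by
    intro f hf
    have h := (hindep.comp hf measurable_id).integral_mul_eq_mul_integral
      ((hf.comp hvec).aestronglyMeasurable) hA.1.aestronglyMeasurable
    exact h
  have hM1A : ∫ ω, M1 ω * A ω ∂P = (∫ ω, M1 ω ∂P) * ∫ ω, A ω ∂P :=
    indepMul (fun p => p.2.1) (measurable_snd.comp measurable_id |>.fst)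
  have hM0A : ∫ ω, M0 ω * A ω ∂P = (∫ ω, M0 ω ∂P) * ∫ ω, A ω ∂P :=
    indepMul (fun p => p.1) measurable_fst
  have hY01M0A : ∫ ω, Y01 ω * M0 ω * A ω ∂P
      = (∫ ω, Y01 ω * M0 ω ∂P) * ∫ ω, A ω ∂P :=
    indepMul (fun p => p.2.2.2 * p.1) ((measurable_snd.snd.snd).mul measurable_fst)
  have hY00M0A : ∫ ω, Y00 ω * M0 ω * A ω ∂P
      = (∫ ω, Y00 ω * M0 ω ∂P) * ∫ ω, A ω ∂P :=
    indepMul (fun p => p.2.2.1 * p.1) ((measurable_snd.snd.fst).mul measurable_fst)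
  have hY00A : ∫ ω, Y00 ω * A ω ∂P = (∫ ω, Y00 ω ∂P) * ∫ ω, A ω ∂P :=
    indepMul (fun p => p.2.2.1) measurable_snd.snd.fst
  -- abbreviations
  set a := ∫ ω, A ω ∂P with ha
  set m0I := ∫ ω, M0 ω ∂P with hm0I
  set m1I := ∫ ω, M1 ω ∂P with hm1I
  set y0 := ∫ ω, Y00 ω ∂P with hy0
  set y1 := ∫ ω, Y01 ω ∂P with hy1
  -- measures of strata as integrals
  have t11 : ∫ ω, M0 ω * M1 ω ∂P = (P {ω | M0 ω = 1 ∧ M1 ω = 1}).toReal := by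
    rw [aux_ind P (fun _ => (1:ℝ)) _ _ (mS 1 1) (fun ω => by
      rcases hM0.2 ω with h0|h0 <;> rcases hM1.2 ω with h1|h1 <;>
        simp [Set.mem_setOf_eq, h0, h1])]
    simp [setIntegral_const, measureReal_def]
  have t10 : ∫ ω, M0 ω * (1 - M1 ω) ∂P = (P {ω | M0 ω = 1 ∧ M1 ω = 0}).toReal := by
    rw [aux_ind P (fun _ => (1:ℝ)) _ _ (mS 1 0) (fun ω => by
      rcases hM0.2 ω with h0|h0 <;> rcases hM1.2 ω with h1|h1 <;>
        simp [Set.mem_setOf_eq, h0, h1])]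
    simp [setIntegral_const, measureReal_def]
  have t01 : ∫ ω, (1 - M0 ω) * M1 ω ∂P = (P {ω | M0 ω = 0 ∧ M1 ω = 1}).toReal := by
    rw [aux_ind P (fun _ => (1:ℝ)) _ _ (mS 0 1) (fun ω => by
      rcases hM0.2 ω with h0|h0 <;> rcases hM1.2 ω with h1|h1 <;>
        simp [Set.mem_setOf_eq, h0, h1])]
    simp [setIntegral_const, measureReal_def]
  -- key: E[Z * M0] = E[Z] * E[M0] and E[Z * M1] = E[Z] * E[M1]
  have keyM0 : ∀ Z : Ω → ℝ, (Z = Y00 ∨ Z = Y01) → IsBernoulli Z →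
      ∫ ω, Z ω * M0 ω ∂P = (∫ ω, Z ω ∂P) * m0I := by
    intro Z hZ hZb
    have e1 : ∫ ω, Z ω * (M0 ω * M1 ω) ∂P
        = (∫ ω, Z ω ∂P) * (P {ω | M0 ω = 1 ∧ M1 ω = 1}).toReal := by
      rw [aux_ind P Z _ _ (mS 1 1) (fun ω => by
        rcases hM0.2 ω with h0|h0 <;> rcases hM1.2 ω with h1|h1 <;>
          simp [Set.mem_setOf_eq, h0, h1])]
      exact PIint Z hZ 1 1 (Or.inr rfl) (Or.inr rfl)
    have e2 : ∫ ω, Z ω * (M0 ω * (1 - M1 ω)) ∂P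
        = (∫ ω, Z ω ∂P) * (P {ω | M0 ω = 1 ∧ M1 ω = 0}).toReal := by
      rw [aux_ind P Z _ _ (mS 1 0) (fun ω => by
        rcases hM0.2 ω with h0|h0 <;> rcases hM1.2 ω with h1|h1 <;>
          simp [Set.mem_setOf_eq, h0, h1])]
      exact PIint Z hZ 1 0 (Or.inr rfl) (Or.inl rfl)
    have split : ∫ ω, Z ω * M0 ω ∂P
        = ∫ ω, Z ω * (M0 ω * M1 ω) + Z ω * (M0 ω * (1 - M1 ω)) ∂P := by
      apply integral_congr_ae (ae_of_all _ fun ω => by ring)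
    have splitM : m0I = ∫ ω, M0 ω * M1 ω + M0 ω * (1 - M1 ω) ∂P := by
      rw [hm0I]
      apply integral_congr_ae (ae_of_all _ fun ω => by ring)
    rw [split, integral_add (iB hZb (aux_mul hM0 hM1)) (iB hZb (aux_mul hM0 (aux_sub hM1))),
      e1, e2, splitM,
      integral_add (iB hM0 hM1) (iB hM0 (aux_sub hM1)), t11, t10]
    ring
  have keyM1 : ∀ Z : Ω → ℝ, (Z = Y00 ∨ Z = Y01) → IsBernoulli Z →
      ∫ ω, Z ω * M1 ω ∂P = (∫ ω, Z ω ∂P) * m1I := by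
    intro Z hZ hZb
    have e1 : ∫ ω, Z ω * (M0 ω * M1 ω) ∂P
        = (∫ ω, Z ω ∂P) * (P {ω | M0 ω = 1 ∧ M1 ω = 1}).toReal := by
      rw [aux_ind P Z _ _ (mS 1 1) (fun ω => by
        rcases hM0.2 ω with h0|h0 <;> rcases hM1.2 ω with h1|h1 <;>
          simp [Set.mem_setOf_eq, h0, h1])]
      exact PIint Z hZ 1 1 (Or.inr rfl) (Or.inr rfl)
    have e2 : ∫ ω, Z ω * ((1 - M0 ω) * M1 ω) ∂P
        = (∫ ω, Z ω ∂P) * (P {ω | M0 ω = 0 ∧ M1 ω = 1}).toReal := by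
      rw [aux_ind P Z _ _ (mS 0 1) (fun ω => by
        rcases hM0.2 ω with h0|h0 <;> rcases hM1.2 ω with h1|h1 <;>
          simp [Set.mem_setOf_eq, h0, h1])]
      exact PIint Z hZ 0 1 (Or.inl rfl) (Or.inr rfl)
    have split : ∫ ω, Z ω * M1 ω ∂P
        = ∫ ω, Z ω * (M0 ω * M1 ω) + Z ω * ((1 - M0 ω) * M1 ω) ∂P := by
      apply integral_congr_ae (ae_of_all _ fun ω => by ring)
    have splitM : m1I = ∫ ω, M0 ω * M1 ω + (1 - M0 ω) * M1 ω ∂P := by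
      rw [hm1I]
      apply integral_congr_ae (ae_of_all _ fun ω => by ring)
    rw [split, integral_add (iB hZb (aux_mul hM0 hM1)) (iB hZb (aux_mul (aux_sub hM0) hM1)),
      e1, e2, splitM,
      integral_add (iB hM0 hM1) (iB (aux_sub hM0) hM1), t11, t01]
    ring
  -- LHS
  have hY01M0 : ∫ ω, Y01 ω * M0 ω ∂P = y1 * m0I := keyM0 Y01 (Or.inr rfl) hY01
  have hY00M0 : ∫ ω, Y00 ω * M0 ω ∂P = y0 * m0I := keyM0 Y00 (Or.inl rfl) hY00
  have hY01M1 : ∫ ω, Y01 ω * M1 ω ∂P = y1 * m1I := keyM1 Y01 (Or.inr rfl) hY01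
  have hY00M1 : ∫ ω, Y00 ω * M1 ω ∂P = y0 * m1I := keyM1 Y00 (Or.inl rfl) hY00
  have hLHS : ∫ ω, ((Y01 ω * M1 ω + Y00 ω * (1 - M1 ω))
        - (Y01 ω * M0 ω + Y00 ω * (1 - M0 ω))) ∂P
      = (y1 - y0) * (m1I - m0I) := by
    have split : ∫ ω, ((Y01 ω * M1 ω + Y00 ω * (1 - M1 ω))
          - (Y01 ω * M0 ω + Y00 ω * (1 - M0 ω))) ∂P
        = ∫ ω, (Y01 ω * M1 ω - Y00 ω * M1 ω) - (Y01 ω * M0 ω - Y00 ω * M0 ω) ∂P :=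
      integral_congr_ae (ae_of_all _ fun ω => by ring)
    rw [split, integral_sub (isub _ _ (iB hY01 hM1) (iB hY00 hM1)) (isub _ _ (iB hY01 hM0) (iB hY00 hM0)),
      integral_sub (iB hY01 hM1) (iB hY00 hM1), integral_sub (iB hY01 hM0) (iB hY00 hM0),
      hY01M1, hY00M1, hY01M0, hY00M0]
    ring
  -- measures of events as integrals
  have tA1 : (P {ω | A ω = 1}).toReal = a := by
    rw [ha, aux_ind P (fun _ => (1:ℝ)) _ _ mT1 (fun ω => by
      rcases hA.2 ω with h|h <;> simp [Set.mem_setOf_eq, h])]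
    simp [setIntegral_const, measureReal_def]
  have tA0 : (P {ω | A ω = 0}).toReal = 1 - a := by
    have : ∫ ω, (1 - A ω) ∂P = 1 - a := by
      rw [integral_sub (integrable_const 1) iA, integral_const]; simp [ha]
    rw [← this, aux_ind P (fun _ => (1:ℝ)) _ _ mT0 (fun ω => by
      rcases hA.2 ω with h|h <;> simp [Set.mem_setOf_eq, h])]
    simp [setIntegral_const, measureReal_def]
  have tU1 : (P {ω | A ω = 0 ∧ M ω = 1}).toReal = m0I * (1 - a) := by
    have hint : ∫ ω, (M0 ω * (1 - A ω)) ∂P = m0I * (1 - a) := by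
      have : ∫ ω, (M0 ω * (1 - A ω)) ∂P = ∫ ω, M0 ω - M0 ω * A ω ∂P :=
        integral_congr_ae (ae_of_all _ fun ω => by ring)
      rw [this, integral_sub iM0 (iB hM0 hA), hM0A]; ring
    rw [← hint, aux_ind P (fun _ => (1:ℝ)) _ _ mU1 (fun ω => by
      rcases hA.2 ω with h|h <;> rcases hM0.2 ω with h0|h0 <;>
        simp [Set.mem_setOf_eq, h, h0, hM ω])]
    simp [setIntegral_const, measureReal_def]
  have tU0 : (P {ω | A ω = 0 ∧ M ω = 0}).toReal = (1 - m0I) * (1 - a) := by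
    have hint : ∫ ω, ((1 - M0 ω) * (1 - A ω)) ∂P = (1 - m0I) * (1 - a) := by
      have : ∫ ω, ((1 - M0 ω) * (1 - A ω)) ∂P
          = ∫ ω, (1 - A ω) - (M0 ω - M0 ω * A ω) ∂P :=
        integral_congr_ae (ae_of_all _ fun ω => by ring)
      rw [this, integral_sub (isub _ _ (integrable_const 1) iA) (isub _ _ iM0 (iB hM0 hA)),
        integral_sub (integrable_const 1) iA, integral_sub iM0 (iB hM0 hA), hM0A,
        integral_const]
      simp; ring
    rw [← hint, aux_ind P (fun _ => (1:ℝ)) _ _ mU0 (fun ω => by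
      rcases hA.2 ω with h|h <;> rcases hM0.2 ω with h0|h0 <;>
        simp [Set.mem_setOf_eq, h, h0, hM ω])]
    simp [setIntegral_const, measureReal_def]
  -- nonvanishing denominators
  have nA1 : (P {ω | A ω = 1}).toReal ≠ 0 :=
    (ENNReal.toReal_pos hposA.ne' (measure_ne_top P _)).ne'
  have nA0 : (P {ω | A ω = 0}).toReal ≠ 0 := by
    have : 0 < P {ω | A ω = 0} :=
      lt_of_lt_of_le hpos1 (measure_mono fun ω hω => hω.1)
    exact (ENNReal.toReal_pos this.ne' (measure_ne_top P _)).ne'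
  have nU1 : (P {ω | A ω = 0 ∧ M ω = 1}).toReal ≠ 0 :=
    (ENNReal.toReal_pos hpos1.ne' (measure_ne_top P _)).ne'
  have nU0 : (P {ω | A ω = 0 ∧ M ω = 0}).toReal ≠ 0 :=
    (ENNReal.toReal_pos hpos0.ne' (measure_ne_top P _)).ne'
  -- cexp M | A = 1
  have cM1 : cexp P M {ω | A ω = 1} = m1I := by
    unfold cexp
    have : ∫ ω in {ω | A ω = 1}, M ω ∂P = m1I * (P {ω | A ω = 1}).toReal := by
      rw [← aux_ind P M (fun ω => M1 ω * A ω) _ mT1 (fun ω => by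
        rcases hA.2 ω with h|h <;> simp [Set.mem_setOf_eq, h, hM ω]), hM1A, tA1]
    rw [this, mul_div_assoc, div_self nA1, mul_one]
  -- cexp M | A = 0
  have cM0 : cexp P M {ω | A ω = 0} = m0I := by
    unfold cexp
    have hint : ∫ ω, (M0 ω * (1 - A ω)) ∂P = m0I * (1 - a) := by
      have : ∫ ω, (M0 ω * (1 - A ω)) ∂P = ∫ ω, M0 ω - M0 ω * A ω ∂P :=
        integral_congr_ae (ae_of_all _ fun ω => by ring)
      rw [this, integral_sub iM0 (iB hM0 hA), hM0A]; ring
    have : ∫ ω in {ω | A ω = 0}, M ω ∂P = m0I * (1 - a) := by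
      rw [← aux_ind P M (fun ω => M0 ω * (1 - A ω)) _ mT0 (fun ω => by
        rcases hA.2 ω with h|h <;> simp [Set.mem_setOf_eq, h, hM ω])]
      exact hint
    rw [this, tA0, mul_div_assoc, div_self (by rw [← tA0]; exact nA0), mul_one]
  -- cexp I | A = 0, M = 1
  have cI1 : cexp P I {ω | A ω = 0 ∧ M ω = 1} = y1 := by
    unfold cexp
    have hint : ∫ ω, (Y01 ω * (M0 ω * (1 - A ω))) ∂P = y1 * (m0I * (1 - a)) := by
      have : ∫ ω, (Y01 ω * (M0 ω * (1 - A ω))) ∂P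
          = ∫ ω, Y01 ω * M0 ω - Y01 ω * M0 ω * A ω ∂P :=
        integral_congr_ae (ae_of_all _ fun ω => by ring)
      rw [this, integral_sub (iB hY01 hM0)
        (iB (aux_mul hY01 hM0) hA), hY01M0A, hY01M0]
      ring
    have : ∫ ω in {ω | A ω = 0 ∧ M ω = 1}, I ω ∂P = y1 * (m0I * (1 - a)) := by
      rw [← aux_ind P I (fun ω => Y01 ω * (M0 ω * (1 - A ω))) _ mU1 (fun ω => by
        rcases hA.2 ω with h|h <;> rcases hM0.2 ω with h0|h0 <;>
          simp [Set.mem_setOf_eq, h, h0, hM ω, hI ω, hM ω])]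
      exact hint
    rw [this, tU1, mul_div_assoc, div_self (by rw [← tU1]; exact nU1), mul_one]
  -- cexp I | A = 0, M = 0
  have cI0 : cexp P I {ω | A ω = 0 ∧ M ω = 0} = y0 := by
    unfold cexp
    have hint : ∫ ω, (Y00 ω * ((1 - M0 ω) * (1 - A ω))) ∂P
        = y0 * ((1 - m0I) * (1 - a)) := by
      have : ∫ ω, (Y00 ω * ((1 - M0 ω) * (1 - A ω))) ∂P
          = ∫ ω, (Y00 ω - Y00 ω * M0 ω) - (Y00 ω * A ω - Y00 ω * M0 ω * A ω) ∂P :=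
        integral_congr_ae (ae_of_all _ fun ω => by ring)
      rw [this, integral_sub (isub _ _ iY00 (iB hY00 hM0))
        (isub _ _ (iB hY00 hA) (iB (aux_mul hY00 hM0) hA)),
        integral_sub iY00 (iB hY00 hM0),
        integral_sub (iB hY00 hA) (iB (aux_mul hY00 hM0) hA),
        hY00A, hY00M0A, hY00M0]
      ring
    have : ∫ ω in {ω | A ω = 0 ∧ M ω = 0}, I ω ∂P = y0 * ((1 - m0I) * (1 - a)) := by
      rw [← aux_ind P I (fun ω => Y00 ω * ((1 - M0 ω) * (1 - A ω))) _ mU0 (fun ω => by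
        rcases hA.2 ω with h|h <;> rcases hM0.2 ω with h0|h0 <;>
          simp [Set.mem_setOf_eq, h, h0, hM ω, hI ω])]
      exact hint
    rw [this, tU0, mul_div_assoc, div_self (by rw [← tU0]; exact nU0), mul_one]
  rw [hLHS, cM1, cM0, cI1, cI0]
  ring
end

section
/- Let A, M₀, M₁ be Bernoulli random variables and Y_{a,m} for a, m ∈ {0,1} be Bernoulli random variables (the potential outcomes I_{a,m}). Define the observed mediator and outcome by consistency: M := M₁·1{A = 1} + M₀·1{A = 0} and I := Σ_{a,m ∈ {0,1}} Y_{a,m}·1{A = a}·1{M = m} (pointwise). Assume: (i) treatment ignorability with no measured confounders, i.e. the random vector (M₀, M₁, Y₀₀, Y₀₁, Y₁₀, Y₁₁) is independent of A; (ii) principal ignorability: for every a, m ∈ {0,1} and every m₀, m₁ ∈ {0,1} with P(M₀ = m₀, M₁ = m₁) > 0, E[Y_{a,m} | M₀ = m₀, M₁ = m₁] = E[Y_{a,m}]; (iii) positivity: P(A = 1) > 0 and P(A = a, M = m) > 0 for all a, m ∈ {0,1}. Then the natural direct effect is identified from observed data: E[I_{1,M₁} − I_{0,M₁}] = (E[I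 | A = 1, M = 0] − E[I | A = 0, M = 0]) · (1 − E[M | A = 1]) + (E[I | A = 1, M = 1] − E[I | A = 0, M = 1]) · E[M | A = 1]. -/
open MeasureTheory ProbabilityTheory
open scoped Classical

/-- A measurable function bounded by 1 in absolute value is integrable on a
finite measure space. -/
lemma integrable_of_bdd1 {Ω : Type*} [MeasurableSpace Ω] {P : Measure Ω} [IsFiniteMeasure P]
    {f : Ω → ℝ} (hf : Measurable f) (h : ∀ ω, |f ω| ≤ 1) : Integrable f P :=
  (integrable_const (1 : ℝ)).mono' hf.aestronglyMeasurable
    (Filter.Eventually.of_forall fun ω => by simpa using h ω)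

/-- The integral of an indicator is the measure of the underlying set. -/
lemma integral_ind {Ω : Type*} [MeasurableSpace Ω] (P : Measure Ω) [IsFiniteMeasure P]
    {p : Ω → Prop} [DecidablePred p] (hs : MeasurableSet {ω | p ω}) :
    ∫ ω, (if p ω then (1 : ℝ) else 0) ∂P = (P {ω | p ω}).toReal := by
  have h1 : (fun ω => if p ω then (1 : ℝ) else 0)
      = Set.indicator {ω | p ω} (fun _ => (1 : ℝ)) := by
    funext ω
    by_cases h : p ω <;> simp [Set.indicator_apply, h]
  rw [h1]
  simpa [measureReal_def] using integral_indicator_const (1 : ℝ) hs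

/-- Pointwise form of the product formula for independent random variables. -/
lemma indep_integral_mul {Ω : Type*} [MeasurableSpace Ω] {P : Measure Ω}
    {X Z : Ω → ℝ} (h : IndepFun X Z P) (hX : Integrable X P) (hZ : Integrable Z P) :
    ∫ ω, X ω * Z ω ∂P = (∫ ω, X ω ∂P) * ∫ ω, Z ω ∂P :=
  h.integral_fun_mul_eq_mul_integral hX.aestronglyMeasurable hZ.aestronglyMeasurable

/-- Identification of the natural direct effect `E[I_{1,M₁} − I_{0,M₁}]` from
observed data under treatment ignorability (independence of the vector of
potential mediators and outcomes from the exposure), principal ignorability,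
consistency, and positivity. `Y a m` is the potential outcome `I_{a,m}`. -/
theorem stmt_15 {Ω : Type*} [MeasurableSpace Ω] (P : Measure Ω) [IsProbabilityMeasure P]
    (A M0 M1 M I : Ω → ℝ) (Y : Fin 2 → Fin 2 → Ω → ℝ)
    (hA : IsBernoulli A) (hM0 : IsBernoulli M0) (hM1 : IsBernoulli M1)
    (hY : ∀ a m, IsBernoulli (Y a m))
    (hM : ∀ ω, M ω = M1 ω * (if A ω = 1 then 1 else 0)
      + M0 ω * (if A ω = 0 then 1 else 0))
    (hI : ∀ ω, I ω = ∑ a' : Fin 2, ∑ m' : Fin 2,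
      Y a' m' ω * (if A ω = (a'.val : ℝ) then 1 else 0)
        * (if M ω = (m'.val : ℝ) then 1 else 0))
    (hindep : IndepFun
      (fun ω => (M0 ω, M1 ω, Y 0 0 ω, Y 0 1 ω, Y 1 0 ω, Y 1 1 ω)) A P)
    (hPI : ∀ a m : Fin 2, ∀ m0 ∈ ({0, 1} : Set ℝ), ∀ m1 ∈ ({0, 1} : Set ℝ),
      0 < P {ω | M0 ω = m0 ∧ M1 ω = m1} →
      cexp P (Y a m) {ω | M0 ω = m0 ∧ M1 ω = m1} = ∫ ω, Y a m ω ∂P)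
    (hposA : 0 < P {ω | A ω = 1})
    (hpos : ∀ a m : Fin 2, 0 < P {ω | A ω = (a.val : ℝ) ∧ M ω = (m.val : ℝ)}) :
    ∫ ω, ((Y 1 1 ω * M1 ω + Y 1 0 ω * (1 - M1 ω))
        - (Y 0 1 ω * M1 ω + Y 0 0 ω * (1 - M1 ω))) ∂P
      = (cexp P I {ω | A ω = 1 ∧ M ω = 0} - cexp P I {ω | A ω = 0 ∧ M ω = 0})
          * (1 - cexp P M {ω | A ω = 1})
        + (cexp P I {ω | A ω = 1 ∧ M ω = 1} - cexp P I {ω | A ω = 0 ∧ M ω = 1})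
          * cexp P M {ω | A ω = 1} := by
  obtain ⟨hAm, hAv⟩ := hA
  obtain ⟨hM0m, hM0v⟩ := hM0
  obtain ⟨hM1m, hM1v⟩ := hM1
  have hYm : ∀ a m, Measurable (Y a m) := fun a m => (hY a m).1
  have hYv : ∀ a m (ω : Ω), Y a m ω = 0 ∨ Y a m ω = 1 := fun a m => (hY a m).2
  have habs : ∀ {x : ℝ}, x = 0 ∨ x = 1 → |x| ≤ 1 := by
    rintro x (rfl | rfl) <;> norm_num
  -- measurability of M and I
  have hMm : Measurable M := by
    have h : M = fun ω => M1 ω * (if A ω = 1 then 1 else 0)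
        + M0 ω * (if A ω = 0 then 1 else 0) := funext hM
    rw [h]
    exact (hM1m.mul (Measurable.ite (hAm (measurableSet_singleton 1))
        measurable_const measurable_const)).add
      (hM0m.mul (Measurable.ite (hAm (measurableSet_singleton 0))
        measurable_const measurable_const))
  have hIm : Measurable I := by
    have h : I = fun ω => ∑ a' : Fin 2, ∑ m' : Fin 2,
        Y a' m' ω * (if A ω = (a'.val : ℝ) then 1 else 0)
          * (if M ω = (m'.val : ℝ) then 1 else 0) := funext hI
    rw [h]
    refine Finset.measurable_sum _ fun a' _ => Finset.measurable_sum _ fun m' _ => ?_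
    exact ((hYm _ _).mul (Measurable.ite (hAm (measurableSet_singleton _))
        measurable_const measurable_const)).mul
      (Measurable.ite (hMm (measurableSet_singleton _)) measurable_const measurable_const)
  -- integrability helpers
  have hintY : ∀ a m : Fin 2, Integrable (Y a m) P :=
    fun a m => integrable_of_bdd1 (hYm a m) (fun ω => habs (hYv a m ω))
  have hintM1 : Integrable M1 P := integrable_of_bdd1 hM1m (fun ω => habs (hM1v ω))
  have hintYind : ∀ (a m : Fin 2) (p : Ω → Prop) (inst : DecidablePred p),
      MeasurableSet {ω | p ω} →
      Integrable (fun ω => Y a m ω * @ite ℝ (p ω) (inst ω) 1 0) P := by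
    intro a m p inst hp
    letI := inst
    refine integrable_of_bdd1 ((hYm a m).mul
      (Measurable.ite hp measurable_const measurable_const)) (fun ω => ?_)
    by_cases h : p ω <;> rcases hYv a m ω with hy | hy <;> norm_num [h, hy]
  have hintind : ∀ (p : Ω → Prop) (inst : DecidablePred p), MeasurableSet {ω | p ω} →
      Integrable (fun ω => @ite ℝ (p ω) (inst ω) 1 0) P := by
    intro p inst hp
    letI := inst
    refine integrable_of_bdd1 (Measurable.ite hp measurable_const measurable_const)
      (fun ω => ?_)
    by_cases h : p ω <;> norm_num [h]
  -- strata lemma: integral of Y times a principal-stratum indicator factorizes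
  have hstrat : ∀ (a m : Fin 2) (m0 m1 : ℝ), (m0 = 0 ∨ m0 = 1) → (m1 = 0 ∨ m1 = 1) →
      ∫ ω, Y a m ω * (if M0 ω = m0 ∧ M1 ω = m1 then 1 else 0) ∂P
        = (∫ ω, Y a m ω ∂P) * (P {ω | M0 ω = m0 ∧ M1 ω = m1}).toReal := by
    intro a m m0 m1 h0 h1
    have hsmeas : MeasurableSet {ω | M0 ω = m0 ∧ M1 ω = m1} :=
      (hM0m (measurableSet_singleton m0)).inter (hM1m (measurableSet_singleton m1))
    have hint : ∫ ω, Y a m ω * (if M0 ω = m0 ∧ M1 ω = m1 then 1 else 0) ∂P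
        = ∫ ω in {ω | M0 ω = m0 ∧ M1 ω = m1}, Y a m ω ∂P := by
      rw [← integral_indicator hsmeas]
      congr 1
      funext ω
      by_cases h : M0 ω = m0 ∧ M1 ω = m1 <;>
        simp [Set.indicator_apply, Set.mem_setOf_eq, h]
    rw [hint]
    rcases eq_or_lt_of_le (show (0:ENNReal) ≤ P {ω | M0 ω = m0 ∧ M1 ω = m1} from zero_le) with hzero | hpos'
    · rw [setIntegral_measure_zero _ hzero.symm, ← hzero]
      simp
    · have hpi := hPI a m m0 (by rcases h0 with rfl | rfl <;> simp) m1
        (by rcases h1 with rfl | rfl <;> simp) hpos'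
      unfold cexp at hpi
      have hne : (P {ω | M0 ω = m0 ∧ M1 ω = m1}).toReal ≠ 0 :=
        (ENNReal.toReal_pos hpos'.ne' (measure_ne_top P _)).ne'
      rw [div_eq_iff hne] at hpi
      exact hpi
  -- key lemma: Y a m is mean-independent of each potential mediator
  have hkey : ∀ (a m : Fin 2) (N : Ω → ℝ), (N = M0 ∨ N = M1) → ∀ (c : ℝ),
      (c = 0 ∨ c = 1) →
      ∫ ω, Y a m ω * (if N ω = c then 1 else 0) ∂P
        = (∫ ω, Y a m ω ∂P) * (P {ω | N ω = c}).toReal := by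
    intro a m N hN c hc
    rcases hN with rfl | rfl
    · have hpt : ∀ ω : Ω, (if N ω = c then (1:ℝ) else 0)
          = (if N ω = c ∧ M1 ω = 0 then 1 else 0) + (if N ω = c ∧ M1 ω = 1 then 1 else 0) := by
        intro ω
        rcases hM1v ω with h | h <;> by_cases h' : N ω = c <;> norm_num [h, h']
      have hm0 : MeasurableSet {ω | N ω = c ∧ M1 ω = 0} :=
        (hM0m (measurableSet_singleton c)).inter (hM1m (measurableSet_singleton 0))
      have hm1 : MeasurableSet {ω | N ω = c ∧ M1 ω = 1} :=
        (hM0m (measurableSet_singleton c)).inter (hM1m (measurableSet_singleton 1))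
      have hset : {ω | N ω = c} = {ω | N ω = c ∧ M1 ω = 0} ∪ {ω | N ω = c ∧ M1 ω = 1} := by
        ext ω
        rcases hM1v ω with h | h <;> simp [h]
      have hd : Disjoint {ω | N ω = c ∧ M1 ω = 0} {ω | N ω = c ∧ M1 ω = 1} := by
        rw [Set.disjoint_left]
        rintro ω ⟨-, h0⟩ ⟨-, h1⟩
        rw [h0] at h1
        norm_num at h1
      have hPadd : (P {ω | N ω = c}).toReal
          = (P {ω | N ω = c ∧ M1 ω = 0}).toReal + (P {ω | N ω = c ∧ M1 ω = 1}).toReal := by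
        rw [hset, measure_union hd hm1,
          ENNReal.toReal_add (measure_ne_top _ _) (measure_ne_top _ _)]
      have heq : ∫ ω, Y a m ω * (if N ω = c then 1 else 0) ∂P
          = ∫ ω, (Y a m ω * (if N ω = c ∧ M1 ω = 0 then 1 else 0)
            + Y a m ω * (if N ω = c ∧ M1 ω = 1 then 1 else 0)) ∂P := by
        congr 1
        funext ω
        rw [hpt ω]
        ring
      have int1 : Integrable (fun ω => Y a m ω * if N ω = c ∧ M1 ω = 0 then 1 else 0) P :=
        hintYind a m _ _ hm0
      have int2 : Integrable (fun ω => Y a m ω * if N ω = c ∧ M1 ω = 1 then 1 else 0) P :=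
        hintYind a m _ _ hm1
      rw [heq, integral_add int1 int2,
        hstrat a m c 0 hc (Or.inl rfl), hstrat a m c 1 hc (Or.inr rfl), hPadd]
      ring
    · have hpt : ∀ ω : Ω, (if N ω = c then (1:ℝ) else 0)
          = (if M0 ω = 0 ∧ N ω = c then 1 else 0) + (if M0 ω = 1 ∧ N ω = c then 1 else 0) := by
        intro ω
        rcases hM0v ω with h | h <;> by_cases h' : N ω = c <;> norm_num [h, h']
      have hm0 : MeasurableSet {ω | M0 ω = 0 ∧ N ω = c} :=
        (hM0m (measurableSet_singleton 0)).inter (hM1m (measurableSet_singleton c))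
      have hm1 : MeasurableSet {ω | M0 ω = 1 ∧ N ω = c} :=
        (hM0m (measurableSet_singleton 1)).inter (hM1m (measurableSet_singleton c))
      have hset : {ω | N ω = c} = {ω | M0 ω = 0 ∧ N ω = c} ∪ {ω | M0 ω = 1 ∧ N ω = c} := by
        ext ω
        rcases hM0v ω with h | h <;> simp [h]
      have hd : Disjoint {ω | M0 ω = 0 ∧ N ω = c} {ω | M0 ω = 1 ∧ N ω = c} := by
        rw [Set.disjoint_left]
        rintro ω ⟨h0, -⟩ ⟨h1, -⟩
        rw [h0] at h1
        norm_num at h1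
      have hPadd : (P {ω | N ω = c}).toReal
          = (P {ω | M0 ω = 0 ∧ N ω = c}).toReal + (P {ω | M0 ω = 1 ∧ N ω = c}).toReal := by
        rw [hset, measure_union hd hm1,
          ENNReal.toReal_add (measure_ne_top _ _) (measure_ne_top _ _)]
      have heq : ∫ ω, Y a m ω * (if N ω = c then 1 else 0) ∂P
          = ∫ ω, (Y a m ω * (if M0 ω = 0 ∧ N ω = c then 1 else 0)
            + Y a m ω * (if M0 ω = 1 ∧ N ω = c then 1 else 0)) ∂P := by
        congr 1
        funext ω
        rw [hpt ω]
        ring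
      have int1 : Integrable (fun ω => Y a m ω * if M0 ω = 0 ∧ N ω = c then 1 else 0) P :=
        hintYind a m _ _ hm0
      have int2 : Integrable (fun ω => Y a m ω * if M0 ω = 1 ∧ N ω = c then 1 else 0) P :=
        hintYind a m _ _ hm1
      rw [heq, integral_add int1 int2,
        hstrat a m 0 c (Or.inl rfl) hc, hstrat a m 1 c (Or.inr rfl) hc, hPadd]
      ring
  -- notation for mean of M1
  have hM1set : MeasurableSet {ω | M1 ω = 1} := hM1m (measurableSet_singleton 1)
  have hq : ∫ ω, M1 ω ∂P = (P {ω | M1 ω = 1}).toReal := by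
    rw [← integral_ind P hM1set]
    congr 1
    funext ω
    rcases hM1v ω with h | h <;> norm_num [h]
  set q : ℝ := (P {ω | M1 ω = 1}).toReal with hqdef
  -- products with M1 factorize
  have hYM1 : ∀ a m : Fin 2, ∫ ω, Y a m ω * M1 ω ∂P = (∫ ω, Y a m ω ∂P) * q := by
    intro a m
    have h : (fun ω => Y a m ω * M1 ω)
        = fun ω => Y a m ω * (if M1 ω = 1 then 1 else 0) := by
      funext ω
      rcases hM1v ω with h | h <;> norm_num [h]
    rw [h, hkey a m M1 (Or.inr rfl) 1 (Or.inr rfl)]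
  have hintYM1 : ∀ a m : Fin 2, Integrable (fun ω => Y a m ω * M1 ω) P := by
    intro a m
    have h : (fun ω => Y a m ω * M1 ω)
        = fun ω => Y a m ω * (if M1 ω = 1 then 1 else 0) := by
      funext ω
      rcases hM1v ω with h | h <;> norm_num [h]
    rw [h]
    exact hintYind a m _ _ hM1set
  have hY1mM1 : ∀ a m : Fin 2, ∫ ω, Y a m ω * (1 - M1 ω) ∂P
      = (∫ ω, Y a m ω ∂P) * (1 - q) := by
    intro a m
    have h : (fun ω => Y a m ω * (1 - M1 ω)) = fun ω => Y a m ω - Y a m ω * M1 ω := by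
      funext ω; ring
    rw [h, integral_sub (hintY a m) (hintYM1 a m), hYM1 a m]
    ring
  have hintY1m : ∀ a m : Fin 2, Integrable (fun ω => Y a m ω * (1 - M1 ω)) P := by
    intro a m
    have h : (fun ω => Y a m ω * (1 - M1 ω)) = fun ω => Y a m ω - Y a m ω * M1 ω := by
      funext ω; ring
    rw [h]
    exact (hintY a m).sub (hintYM1 a m)
  -- LHS computation
  have hLHS : ∫ ω, ((Y 1 1 ω * M1 ω + Y 1 0 ω * (1 - M1 ω))
        - (Y 0 1 ω * M1 ω + Y 0 0 ω * (1 - M1 ω))) ∂P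
      = ((∫ ω, Y 1 1 ω ∂P) - ∫ ω, Y 0 1 ω ∂P) * q
        + ((∫ ω, Y 1 0 ω ∂P) - ∫ ω, Y 0 0 ω ∂P) * (1 - q) := by
    have i1 : Integrable (fun ω => Y 1 1 ω * M1 ω + Y 1 0 ω * (1 - M1 ω)) P :=
      (hintYM1 1 1).add (hintY1m 1 0)
    have i2 : Integrable (fun ω => Y 0 1 ω * M1 ω + Y 0 0 ω * (1 - M1 ω)) P :=
      (hintYM1 0 1).add (hintY1m 0 0)
    rw [integral_sub i1 i2,
      integral_add (hintYM1 1 1) (hintY1m 1 0), integral_add (hintYM1 0 1) (hintY1m 0 0),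
      hYM1 1 1, hYM1 0 1, hY1mM1 1 0, hY1mM1 0 0]
    ring
  -- observed conditional mean of M given A = 1
  have hAset : MeasurableSet {ω | A ω = 1} := hAm (measurableSet_singleton 1)
  have hA1fun : (fun ω => (if A ω = 1 then (1:ℝ) else 0)) = A := by
    funext ω
    rcases hAv ω with h | h <;> norm_num [h]
  have hpA : (P {ω | A ω = 1}).toReal ≠ 0 :=
    (ENNReal.toReal_pos hposA.ne' (measure_ne_top P _)).ne'
  have hintA : Integrable A P := integrable_of_bdd1 hAm (fun ω => habs (hAv ω))
  have hMA1 : ∀ ω, A ω = 1 → M ω = M1 ω := by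
    intro ω h
    rw [hM ω]
    norm_num [h]
  have hMA0 : ∀ ω, A ω = 0 → M ω = M0 ω := by
    intro ω h
    rw [hM ω]
    norm_num [h]
  have hcexpM : cexp P M {ω | A ω = 1} = q := by
    unfold cexp
    have h1 : ∫ ω in {ω | A ω = 1}, M ω ∂P = ∫ ω, M1 ω * A ω ∂P := by
      rw [← integral_indicator hAset]
      congr 1
      funext ω
      by_cases h : A ω = 1
      · simp [Set.indicator_apply, Set.mem_setOf_eq, h, hMA1 ω h]
      · have h0 := (hAv ω).resolve_right h
        simp [Set.indicator_apply, Set.mem_setOf_eq, h, h0]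
    have hiM1A : IndepFun M1 A P :=
      hindep.comp (measurable_fst.comp measurable_snd) measurable_id
    have h2 : ∫ ω, M1 ω * A ω ∂P = q * (P {ω | A ω = 1}).toReal := by
      rw [indep_integral_mul hiM1A hintM1 hintA, hq]
      congr 1
      rw [← integral_ind P hAset]
      congr 1
      funext ω
      rcases hAv ω with h | h <;> norm_num [h]
    rw [h1, h2, mul_div_assoc, div_self hpA, mul_one]
  -- core identification lemma for the conditional means of I
  have core : ∀ (Ya Ma : Ω → ℝ) (aR mR : ℝ),
      Measurable Ya → (∀ ω, |Ya ω| ≤ 1) → Measurable Ma →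
      (∀ ω, A ω = aR → M ω = Ma ω) →
      (∀ ω, A ω = aR → M ω = mR → I ω = Ya ω) →
      (∫ ω, Ya ω * (if Ma ω = mR then 1 else 0) ∂P
        = (∫ ω, Ya ω ∂P) * (P {ω | Ma ω = mR}).toReal) →
      IndepFun (fun ω => Ya ω * (if Ma ω = mR then 1 else 0))
        (fun ω => if A ω = aR then (1:ℝ) else 0) P →
      IndepFun (fun ω => if Ma ω = mR then (1:ℝ) else 0)
        (fun ω => if A ω = aR then (1:ℝ) else 0) P →
      0 < P {ω | A ω = aR ∧ M ω = mR} →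
      cexp P I {ω | A ω = aR ∧ M ω = mR} = ∫ ω, Ya ω ∂P := by
    intro Ya Ma aR mR hYam hYab hMam hcons hIeq hk hiY hiI hposS
    have hsmeas : MeasurableSet {ω | A ω = aR ∧ M ω = mR} :=
      (hAm (measurableSet_singleton aR)).inter (hMm (measurableSet_singleton mR))
    have hMaset : MeasurableSet {ω | Ma ω = mR} := hMam (measurableSet_singleton mR)
    have hAset' : MeasurableSet {ω | A ω = aR} := hAm (measurableSet_singleton aR)
    -- integrable pieces
    have hintYa : Integrable (fun ω => Ya ω * (if Ma ω = mR then 1 else 0)) P := by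
      refine integrable_of_bdd1 (hYam.mul (Measurable.ite hMaset measurable_const
        measurable_const)) (fun ω => ?_)
      rw [abs_mul]
      have h2 : |(if Ma ω = mR then (1:ℝ) else 0)| ≤ 1 := by
        by_cases h : Ma ω = mR <;> simp [h]
      calc |Ya ω| * |(if Ma ω = mR then (1:ℝ) else 0)| ≤ 1 * 1 :=
            mul_le_mul (hYab ω) h2 (abs_nonneg _) zero_le_one
        _ = 1 := by norm_num
    have hintMa : Integrable (fun ω => if Ma ω = mR then (1:ℝ) else 0) P :=
      hintind _ _ hMaset
    have hintA' : Integrable (fun ω => if A ω = aR then (1:ℝ) else 0) P :=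
      hintind _ _ hAset'
    -- numerator
    have h1 : ∫ ω in {ω | A ω = aR ∧ M ω = mR}, I ω ∂P
        = ∫ ω, (Ya ω * (if Ma ω = mR then 1 else 0)) * (if A ω = aR then 1 else 0) ∂P := by
      rw [← integral_indicator hsmeas]
      congr 1
      funext ω
      by_cases hA' : A ω = aR
      · by_cases hM' : M ω = mR
        · have hMa' : Ma ω = mR := by rw [← hcons ω hA']; exact hM'
          simp [Set.indicator_apply, Set.mem_setOf_eq, hA', hM', hMa', hIeq ω hA' hM']
        · have hMa' : Ma ω ≠ mR := by rw [← hcons ω hA']; exact hM'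
          simp [Set.indicator_apply, Set.mem_setOf_eq, hA', hM', hMa']
      · simp [Set.indicator_apply, Set.mem_setOf_eq, hA']
    have h2 : ∫ ω, (Ya ω * (if Ma ω = mR then 1 else 0)) * (if A ω = aR then 1 else 0) ∂P
        = ((∫ ω, Ya ω ∂P) * (P {ω | Ma ω = mR}).toReal)
          * ∫ ω, (if A ω = aR then (1:ℝ) else 0) ∂P := by
      rw [indep_integral_mul hiY hintYa hintA', hk]
    -- denominator
    have h3 : (P {ω | A ω = aR ∧ M ω = mR}).toReal
        = (P {ω | Ma ω = mR}).toReal * ∫ ω, (if A ω = aR then (1:ℝ) else 0) ∂P := by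
      have hpt : (fun ω => if (A ω = aR ∧ M ω = mR) then (1:ℝ) else 0)
          = fun ω => (if Ma ω = mR then (1:ℝ) else 0) * (if A ω = aR then 1 else 0) := by
        funext ω
        by_cases hA' : A ω = aR
        · have hc := hcons ω hA'
          by_cases hM' : M ω = mR
          · have hMa' : Ma ω = mR := by rw [← hc]; exact hM'
            simp [hA', hM', hMa']
          · have hMa' : Ma ω ≠ mR := by rw [← hc]; exact hM'
            simp [hA', hM', hMa']
        · simp [hA']
      rw [← integral_ind P hsmeas, hpt, indep_integral_mul hiI hintMa hintA',
        integral_ind P hMaset]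
    -- conclusion
    unfold cexp
    rw [h1, h2, h3]
    have hprod : (0:ℝ) < (P {ω | Ma ω = mR}).toReal
        * ∫ ω, (if A ω = aR then (1:ℝ) else 0) ∂P := by
      rw [← h3]
      exact ENNReal.toReal_pos hposS.ne' (measure_ne_top P _)
    have hx : (P {ω | Ma ω = mR}).toReal ≠ 0 :=
      fun h => by rw [h, zero_mul] at hprod; exact lt_irrefl 0 hprod
    have hy : (∫ ω, (if A ω = aR then (1:ℝ) else 0) ∂P) ≠ 0 :=
      fun h => by rw [h, mul_zero] at hprod; exact lt_irrefl 0 hprod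
    field_simp
  -- consistency of I on each observed cell
  have hI11 : ∀ ω, A ω = 1 → M ω = 1 → I ω = Y 1 1 ω := by
    intro ω ha hm
    rw [hI ω]
    simp [Fin.sum_univ_two, ha, hm]
  have hI10 : ∀ ω, A ω = 1 → M ω = 0 → I ω = Y 1 0 ω := by
    intro ω ha hm
    rw [hI ω]
    simp [Fin.sum_univ_two, ha, hm]
  have hI01 : ∀ ω, A ω = 0 → M ω = 1 → I ω = Y 0 1 ω := by
    intro ω ha hm
    rw [hI ω]
    simp [Fin.sum_univ_two, ha, hm]
  have hI00 : ∀ ω, A ω = 0 → M ω = 0 → I ω = Y 0 0 ω := by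
    intro ω ha hm
    rw [hI ω]
    simp [Fin.sum_univ_two, ha, hm]
  -- independence instances, via composition with the potential-outcome vector
  have hcomp : ∀ (φ : ℝ × ℝ × ℝ × ℝ × ℝ × ℝ → ℝ) (χ : ℝ → ℝ),
      Measurable φ → Measurable χ →
      IndepFun (fun ω => φ (M0 ω, M1 ω, Y 0 0 ω, Y 0 1 ω, Y 1 0 ω, Y 1 1 ω))
        (fun ω => χ (A ω)) P :=
    fun φ χ hφ hχ => hindep.comp hφ hχ
  have mprojM0 : Measurable fun v : ℝ × ℝ × ℝ × ℝ × ℝ × ℝ => v.1 := measurable_fst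
  have mprojM1 : Measurable fun v : ℝ × ℝ × ℝ × ℝ × ℝ × ℝ => v.2.1 :=
    measurable_fst.comp measurable_snd
  have mprojY00 : Measurable fun v : ℝ × ℝ × ℝ × ℝ × ℝ × ℝ => v.2.2.1 :=
    measurable_fst.comp (measurable_snd.comp measurable_snd)
  have mprojY01 : Measurable fun v : ℝ × ℝ × ℝ × ℝ × ℝ × ℝ => v.2.2.2.1 :=
    measurable_fst.comp (measurable_snd.comp (measurable_snd.comp measurable_snd))
  have mprojY10 : Measurable fun v : ℝ × ℝ × ℝ × ℝ × ℝ × ℝ => v.2.2.2.2.1 :=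
    measurable_fst.comp (measurable_snd.comp (measurable_snd.comp
      (measurable_snd.comp measurable_snd)))
  have mprojY11 : Measurable fun v : ℝ × ℝ × ℝ × ℝ × ℝ × ℝ => v.2.2.2.2.2 :=
    measurable_snd.comp (measurable_snd.comp (measurable_snd.comp
      (measurable_snd.comp measurable_snd)))
  have mchi : ∀ c : ℝ, Measurable fun x : ℝ => if x = c then (1:ℝ) else 0 :=
    fun c => Measurable.ite (measurableSet_singleton c) measurable_const measurable_const
  have mite : ∀ (f : ℝ × ℝ × ℝ × ℝ × ℝ × ℝ → ℝ) (c : ℝ), Measurable f →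
      Measurable (fun v => if f v = c then (1:ℝ) else 0) :=
    fun f c hf => Measurable.ite (hf (measurableSet_singleton c))
      measurable_const measurable_const
  -- positivity in literal form
  have hpos11 : 0 < P {ω | A ω = 1 ∧ M ω = 1} := by have h := hpos 1 1; norm_num at h; exact h
  have hpos10 : 0 < P {ω | A ω = 1 ∧ M ω = 0} := by have h := hpos 1 0; norm_num at h; exact h
  have hpos01 : 0 < P {ω | A ω = 0 ∧ M ω = 1} := by have h := hpos 0 1; norm_num at h; exact h
  have hpos00 : 0 < P {ω | A ω = 0 ∧ M ω = 0} := by have h := hpos 0 0; norm_num at h; exact h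
  -- the four identification results
  have hc11 : cexp P I {ω | A ω = 1 ∧ M ω = 1} = ∫ ω, Y 1 1 ω ∂P :=
    core (Y 1 1) M1 1 1 (hYm 1 1) (fun ω => habs (hYv 1 1 ω)) hM1m hMA1 hI11
      (hkey 1 1 M1 (Or.inr rfl) 1 (Or.inr rfl))
      (hcomp (fun v => v.2.2.2.2.2 * (if v.2.1 = 1 then 1 else 0)) (fun x => if x = 1 then 1 else 0)
        (mprojY11.mul (mite _ 1 mprojM1)) (mchi 1))
      (hcomp (fun v => if v.2.1 = 1 then (1:ℝ) else 0) (fun x => if x = 1 then 1 else 0)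
        (mite _ 1 mprojM1) (mchi 1)) hpos11
  have hc10 : cexp P I {ω | A ω = 1 ∧ M ω = 0} = ∫ ω, Y 1 0 ω ∂P :=
    core (Y 1 0) M1 1 0 (hYm 1 0) (fun ω => habs (hYv 1 0 ω)) hM1m hMA1 hI10
      (hkey 1 0 M1 (Or.inr rfl) 0 (Or.inl rfl))
      (hcomp (fun v => v.2.2.2.2.1 * (if v.2.1 = 0 then 1 else 0)) (fun x => if x = 1 then 1 else 0)
        (mprojY10.mul (mite _ 0 mprojM1)) (mchi 1))
      (hcomp (fun v => if v.2.1 = 0 then (1:ℝ) else 0) (fun x => if x = 1 then 1 else 0)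
        (mite _ 0 mprojM1) (mchi 1)) hpos10
  have hc01 : cexp P I {ω | A ω = 0 ∧ M ω = 1} = ∫ ω, Y 0 1 ω ∂P :=
    core (Y 0 1) M0 0 1 (hYm 0 1) (fun ω => habs (hYv 0 1 ω)) hM0m hMA0 hI01
      (hkey 0 1 M0 (Or.inl rfl) 1 (Or.inr rfl))
      (hcomp (fun v => v.2.2.2.1 * (if v.1 = 1 then 1 else 0)) (fun x => if x = 0 then 1 else 0)
        (mprojY01.mul (mite _ 1 mprojM0)) (mchi 0))
      (hcomp (fun v => if v.1 = 1 then (1:ℝ) else 0) (fun x => if x = 0 then 1 else 0)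
        (mite _ 1 mprojM0) (mchi 0)) hpos01
  have hc00 : cexp P I {ω | A ω = 0 ∧ M ω = 0} = ∫ ω, Y 0 0 ω ∂P :=
    core (Y 0 0) M0 0 0 (hYm 0 0) (fun ω => habs (hYv 0 0 ω)) hM0m hMA0 hI00
      (hkey 0 0 M0 (Or.inl rfl) 0 (Or.inl rfl))
      (hcomp (fun v => v.2.2.1 * (if v.1 = 0 then 1 else 0)) (fun x => if x = 0 then 1 else 0)
        (mprojY00.mul (mite _ 0 mprojM0)) (mchi 0))
      (hcomp (fun v => if v.1 = 0 then (1:ℝ) else 0) (fun x => if x = 0 then 1 else 0)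
        (mite _ 0 mprojM0) (mchi 0)) hpos00
  -- final assembly
  rw [hLHS, hc11, hc10, hc01, hc00, hcexpM]
  ring
end
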